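/- arXiv:0910.0946 — 5 statements merged into one kernel-verified Lean document; each statement's English description precedes it below -/
import Mathlib

section
/- Let G be a graph and A, B, C subsets of V(G) with |B| = 2k−1 for some positive integer k. If there is a set of 2k−1 pairwise vertex-disjoint paths each linking A to B, and a set of 2k−1 pairwise vertex-disjoint paths each linking B to C, then G contains k pairwise vertex-disjoint paths each linking A to C. -/
/-!
By Menger's theorem it suffices to show that every set `T` separating the first vertices of the
`A`–`B` paths from the last vertices of the `B`–`C` paths has at least `k` vertices. A vertex of
`T` lies on at most one path of each family, so if `|T| ≤ k - 1`, at most `2k - 2` vertices of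
`B` lie on a path met by `T`. Through any other vertex of `B` the two families give an `A`–`C`
walk avoiding `T`.

Menger's theorem is proved by induction on `|U| + |E(G)|`, for walks confined to a vertex set
`U`. A common vertex of `A` and `B` is split off as a trivial path. A minimum separator `S`
other than `A` and `B` splits `U` into the part on the side of `A` and the part on the side of
`B`, both smaller than `U`; the linkages onto `S` found on the two sides are joined at `S`.
Otherwise, when every minimum separator is `A` or `B`, a vertex outside `A ∪ B`, or else an
edge from `A` to `B`, can be deleted without lowering the size of a minimum separator.
-/

/-- A path in a simple graph `G`, bundled with its endpoints. -/
structure PathIn (V : Type) (G : SimpleGraph V) where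
  a : V
  b : V
  walk : G.Walk a b
  isPath : walk.IsPath

open Function

section DisjointFamilies

variable {ι V : Type*} {f : ι → List V}

lemma eq_of_mem_of_pairwise_disjoint (hf : Pairwise (List.Disjoint on f)) {i j : ι} {v : V}
    (hi : v ∈ f i) (hj : v ∈ f j) : i = j :=
  by_contra fun h => hf h hi hj

lemma injective_of_pairwise_disjoint (hf : Pairwise (List.Disjoint on f)) {g : ι → V}
    (hg : ∀ i, g i ∈ f i) : Injective g :=
  fun i j hij => eq_of_mem_of_pairwise_disjoint hf (hg i) (hij ▸ hg j)

lemma ncard_setOf_exists_mem_le [Finite V] (hf : Pairwise (List.Disjoint on f)) (T : Set V) :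
    {i | ∃ v ∈ T, v ∈ f i}.ncard ≤ T.ncard := by
  rw [← Nat.card_coe_set_eq, ← Nat.card_coe_set_eq]
  refine Nat.card_le_card_of_injective (fun i => ⟨i.2.choose, i.2.choose_spec.1⟩) ?_
  intro i j hij
  have hij' : i.2.choose = j.2.choose := congrArg Subtype.val hij
  exact Subtype.ext <| eq_of_mem_of_pairwise_disjoint hf i.2.choose_spec.2
    (hij' ▸ j.2.choose_spec.2)

end DisjointFamilies

lemma range_eq_of_injective_of_ncard_eq {V : Type*} [Finite V] {n : ℕ} {g : Fin n → V}
    {S : Set V} (hg : Injective g) (hgS : ∀ i, g i ∈ S) (hS : S.ncard = n) :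
    Set.range g = S :=
  Set.eq_of_subset_of_ncard_le (Set.range_subset_iff.2 hgS)
    (by rw [Set.ncard_range_of_injective hg, Nat.card_eq_fintype_card, Fintype.card_fin, hS])

namespace SimpleGraph

variable {V : Type*} {G : SimpleGraph V}

lemma Walk.exists_isPath_to_first_mem [DecidableEq V] {a b : V} (w : G.Walk a b) {S : Set V}
    (h : ∃ v ∈ S, v ∈ w.support) :
    ∃ s ∈ S, ∃ p : G.Walk a s, p.IsPath ∧ p.support ⊆ w.support ∧
      ∀ u ∈ p.support, u ∈ S → u = s := by
  induction w with
  | nil =>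
    obtain ⟨v, hvS, hv⟩ := h
    rw [support_nil, List.mem_singleton] at hv
    subst hv
    exact ⟨_, hvS, nil, .nil, List.Subset.refl _, by simp⟩
  | @cons u x c hux w ih =>
    by_cases hu : u ∈ S
    · exact ⟨u, hu, nil, .nil, by simp, by simp⟩
    obtain ⟨s, hs, p, -, hpw, hpS⟩ := ih <| by
      obtain ⟨v, hvS, hv⟩ := h
      exact ⟨v, hvS, (List.mem_cons.1 hv).resolve_left fun h => hu (h ▸ hvS)⟩
    have hsub : (cons hux p).bypass.support ⊆ u :: p.support :=
      (cons hux p).support_bypass_subset_support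
    refine ⟨s, hs, (cons hux p).bypass, bypass_isPath _, ?_, fun v hv hvS => ?_⟩
    · exact List.Subset.trans hsub (List.cons_subset_cons u hpw)
    · rcases List.mem_cons.1 (hsub hv) with rfl | hv
      · exact absurd hvS hu
      · exact hpS v hv hvS

lemma Walk.IsPath.eq_of_mem_support_takeUntil [DecidableEq V] {a s v z : V} {S : Set V}
    {p : G.Walk a s} (hp : p.IsPath) (hpS : ∀ u ∈ p.support, u ∈ S → u = s) (hv : v ∈ p.support)
    (hz : z ∈ (p.takeUntil v hv).support) (hzS : z ∈ S) : v = s := by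
  have hzs := hpS z (p.support_takeUntil_subset_support hv hz) hzS
  by_contra hvs
  exact endpoint_notMem_support_takeUntil hp hv (Ne.symm hvs) (hzs ▸ hz)

def Separates (G : SimpleGraph V) (U A B T : Set V) : Prop :=
  ∀ ⦃a b : V⦄ (w : G.Walk a b), a ∈ A → b ∈ B → (∀ v ∈ w.support, v ∈ U) →
    ∃ t ∈ T, t ∈ w.support

variable {U A B S T : Set V}

lemma separates_self (U A B : Set V) : G.Separates U A B U :=
  fun a _ w _ _ hw => ⟨a, hw a w.start_mem_support, w.start_mem_support⟩

lemma separates_right (U A B : Set V) : G.Separates U A B B :=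
  fun _ b w _ hb _ => ⟨b, hb, w.end_mem_support⟩

lemma Separates.symm (h : G.Separates U A B T) : G.Separates U B A T := by
  intro a b w ha hb hw
  obtain ⟨t, ht, htw⟩ := h w.reverse hb ha (by simpa using hw)
  exact ⟨t, ht, by simpa using htw⟩

lemma Separates.insert_of_diff_singleton {c : V}
    (h : G.Separates (U \ {c}) (A \ {c}) (B \ {c}) T) : G.Separates U A B (insert c T) := by
  intro a b w ha hb hw
  by_cases hc : c ∈ w.support
  · exact ⟨c, Set.mem_insert c T, hc⟩
  have hne : ∀ v ∈ w.support, v ≠ c := fun v hv hvc => hc (hvc ▸ hv)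
  obtain ⟨t, ht, htw⟩ := h w ⟨ha, hne a w.start_mem_support⟩ ⟨hb, hne b w.end_mem_support⟩
    fun v hv => ⟨hw v hv, hne v hv⟩
  exact ⟨t, Set.mem_insert_of_mem c ht, htw⟩

lemma Separates.insert_of_deleteEdges {x y : V}
    (h : (G.deleteEdges {s(x, y)}).Separates U A B T) : G.Separates U A B (insert x T) := by
  intro a b w ha hb hw
  by_cases hx : x ∈ w.support
  · exact ⟨x, Set.mem_insert x T, hx⟩
  have hwe : ∀ e ∈ w.edges, e ∉ ({s(x, y)} : Set (Sym2 V)) := by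
    rintro e he rfl
    exact hx (w.fst_mem_support_of_mem_edges he)
  obtain ⟨t, ht, htw⟩ := h (w.toDeleteEdges _ hwe) ha hb (by simpa using hw)
  exact ⟨t, Set.mem_insert_of_mem x ht, by simpa using htw⟩

noncomputable def minSeparatorCard (G : SimpleGraph V) (U A B : Set V) : ℕ :=
  sInf {n | ∃ T ⊆ U, G.Separates U A B T ∧ T.ncard = n}

def IsMinSeparator (G : SimpleGraph V) (U A B S : Set V) : Prop :=
  S ⊆ U ∧ G.Separates U A B S ∧ S.ncard = G.minSeparatorCard U A B

lemma minSeparatorCard_le (hTU : T ⊆ U) (hT : G.Separates U A B T) :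
    G.minSeparatorCard U A B ≤ T.ncard :=
  Nat.sInf_le ⟨T, hTU, hT, rfl⟩

lemma exists_isMinSeparator (G : SimpleGraph V) (U A B : Set V) :
    ∃ S, G.IsMinSeparator U A B S :=
  Nat.sInf_mem (s := {n | ∃ T ⊆ U, G.Separates U A B T ∧ T.ncard = n})
    ⟨_, U, subset_rfl, separates_self U A B, rfl⟩

lemma le_minSeparatorCard_iff {k : ℕ} :
    k ≤ G.minSeparatorCard U A B ↔ ∀ T ⊆ U, G.Separates U A B T → k ≤ T.ncard := by
  refine ⟨fun h T hTU hT => h.trans (minSeparatorCard_le hTU hT), fun h => ?_⟩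
  obtain ⟨S, hSU, hS, hSc⟩ := G.exists_isMinSeparator U A B
  exact hSc ▸ h S hSU hS

lemma minSeparatorCard_comm : G.minSeparatorCard U A B = G.minSeparatorCard U B A :=
  le_antisymm (le_minSeparatorCard_iff.2 fun _ hTU hT => minSeparatorCard_le hTU hT.symm)
    (le_minSeparatorCard_iff.2 fun _ hTU hT => minSeparatorCard_le hTU hT.symm)

lemma IsMinSeparator.symm (h : G.IsMinSeparator U A B S) : G.IsMinSeparator U B A S :=
  ⟨h.1, h.2.1.symm, h.2.2.trans minSeparatorCard_comm⟩

lemma minSeparatorCard_le_ncard_right (hB : B ⊆ U) : G.minSeparatorCard U A B ≤ B.ncard :=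
  minSeparatorCard_le hB (separates_right U A B)

def sideOf (G : SimpleGraph V) (U S A : Set V) : Set V :=
  {v | ∃ a ∈ A, ∃ p : G.Walk a v, (∀ u ∈ p.support, u ∈ U) ∧ ∀ u ∈ p.support, u ∈ S → u = v}

lemma subset_sideOf (hA : A ⊆ U) : A ⊆ G.sideOf U S A :=
  fun a ha => ⟨a, ha, .nil, by simpa using hA ha, by simp⟩

lemma sideOf_subset : G.sideOf U S A ⊆ U :=
  fun _ ⟨_, _, p, hpU, _⟩ => hpU _ p.end_mem_support

lemma notMem_sideOf (hS : G.Separates U A B S) {b : V} (hb : b ∈ B) (hbS : b ∉ S) :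
    b ∉ G.sideOf U S A := by
  rintro ⟨a, ha, p, hpU, hpS⟩
  obtain ⟨t, ht, htp⟩ := hS p ha hb hpU
  exact hbS (hpS t htp ht ▸ ht)

lemma Walk.IsPath.mem_sideOf [DecidableEq V] {a s : V} {p : G.Walk a s} (hp : p.IsPath)
    (ha : a ∈ A) (hpU : ∀ u ∈ p.support, u ∈ U) (hpS : ∀ u ∈ p.support, u ∈ S → u = s)
    {v : V} (hv : v ∈ p.support) : v ∈ G.sideOf U S A :=
  ⟨a, ha, p.takeUntil v hv, fun u hu => hpU u (p.support_takeUntil_subset_support hv hu),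
    fun u hu huS => (hpS u (p.support_takeUntil_subset_support hv hu) huS).trans
      (hp.eq_of_mem_support_takeUntil hpS hv hu huS).symm⟩

lemma Separates.of_sideOf (hS : G.Separates U A B S)
    (hT : G.Separates (G.sideOf U S A ∪ S) A S T) : G.Separates U A B T := by
  classical
  intro a b w ha hb hwU
  obtain ⟨s, hs, p, hp, hpw, hpS⟩ := w.exists_isPath_to_first_mem (hS w ha hb hwU)
  obtain ⟨t, ht, htp⟩ :=
    hT p ha hs fun v hv => .inl (hp.mem_sideOf ha (fun u hu => hwU u (hpw hu)) hpS hv)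
  exact ⟨t, ht, hpw htp⟩

lemma minSeparatorCard_le_sideOf (hSU : S ⊆ U) (hS : G.Separates U A B S) :
    G.minSeparatorCard U A B ≤ G.minSeparatorCard (G.sideOf U S A ∪ S) A S :=
  le_minSeparatorCard_iff.2 fun _ hT hTS =>
    minSeparatorCard_le (hT.trans (Set.union_subset sideOf_subset hSU)) (hS.of_sideOf hTS)

lemma Separates.eq_of_mem_support [DecidableEq V] (hS : G.Separates U A B S)
    {a b s t v : V} (ha : a ∈ A) (hb : b ∈ B) (hs : s ∈ S) (ht : t ∈ S)
    {p : G.Walk a s} {q : G.Walk b t} (hp : p.IsPath) (hq : q.IsPath)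
    (hpU : ∀ u ∈ p.support, u ∈ U) (hqU : ∀ u ∈ q.support, u ∈ U)
    (hpS : ∀ u ∈ p.support, u ∈ S → u = s) (hqS : ∀ u ∈ q.support, u ∈ S → u = t)
    (hvp : v ∈ p.support) (hvq : v ∈ q.support) : s = t := by
  obtain ⟨z, hzS, hz⟩ := hS ((p.takeUntil v hvp).append (q.takeUntil v hvq).reverse) ha hb <| by
    intro u hu
    rw [Walk.mem_support_append_iff, Walk.support_reverse, List.mem_reverse] at hu
    exact hu.elim (fun h => hpU u (p.support_takeUntil_subset_support hvp h))
      (fun h => hqU u (q.support_takeUntil_subset_support hvq h))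
  rw [Walk.mem_support_append_iff, Walk.support_reverse, List.mem_reverse] at hz
  rcases hz with hz | hz
  · have hvs := hp.eq_of_mem_support_takeUntil hpS hvp hz hzS
    exact hvs.symm.trans (hqS v hvq (hvs ▸ hs))
  · have hvt := hq.eq_of_mem_support_takeUntil hqS hvq hz hzS
    exact (hpS v hvp (hvt ▸ ht)).symm.trans hvt

structure Linkage (G : SimpleGraph V) (U A B : Set V) (k : ℕ) where
  src : Fin k → V
  dst : Fin k → V
  walk : ∀ i, G.Walk (src i) (dst i)
  src_mem : ∀ i, src i ∈ A
  dst_mem : ∀ i, dst i ∈ B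
  support_subset : ∀ i, ∀ v ∈ (walk i).support, v ∈ U
  pairwise_disjoint : Pairwise (List.Disjoint on fun i => (walk i).support)

namespace Linkage

variable {k m : ℕ}

def empty : G.Linkage U A B 0 where
  src := Fin.elim0
  dst := Fin.elim0
  walk i := i.elim0
  src_mem i := i.elim0
  dst_mem i := i.elim0
  support_subset i := i.elim0
  pairwise_disjoint i := i.elim0

def single {a b : V} (w : G.Walk a b) (ha : a ∈ A) (hb : b ∈ B) (hw : ∀ v ∈ w.support, v ∈ U) :
    G.Linkage U A B 1 where
  src _ := a
  dst _ := b
  walk _ := w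
  src_mem _ := ha
  dst_mem _ := hb
  support_subset _ := hw
  pairwise_disjoint i j hij := absurd (Subsingleton.elim i j) hij

def take (L : G.Linkage U A B k) (h : m ≤ k) : G.Linkage U A B m where
  src i := L.src (Fin.castLE h i)
  dst i := L.dst (Fin.castLE h i)
  walk i := L.walk (Fin.castLE h i)
  src_mem _ := L.src_mem _
  dst_mem _ := L.dst_mem _
  support_subset _ := L.support_subset _
  pairwise_disjoint := L.pairwise_disjoint.comp_of_injective (Fin.castLE_injective h)

def mono (L : G.Linkage U A B k) {U' : Set V} (h : U ⊆ U') : G.Linkage U' A B k :=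
  { L with support_subset := fun i v hv => h (L.support_subset i v hv) }

def mapLe (L : G.Linkage U A B k) {G' : SimpleGraph V} (h : G ≤ G') : G'.Linkage U A B k where
  src := L.src
  dst := L.dst
  walk i := (L.walk i).mapLe h
  src_mem := L.src_mem
  dst_mem := L.dst_mem
  support_subset i := by simpa using L.support_subset i
  pairwise_disjoint i j hij := by simpa [onFun] using L.pairwise_disjoint hij

def cons {a : V} (L : G.Linkage (U \ {a}) (A \ {a}) (B \ {a}) k) (haA : a ∈ A) (haB : a ∈ B)
    (haU : a ∈ U) : G.Linkage U A B (k + 1) where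
  src := Fin.cons a L.src
  dst := Fin.cons a L.dst
  walk := Fin.cases .nil L.walk
  src_mem := Fin.cases haA fun i => (L.src_mem i).1
  dst_mem := Fin.cases haB fun i => (L.dst_mem i).1
  support_subset := Fin.cases (fun _ hv => List.mem_singleton.1 hv ▸ haU)
    fun i v hv => (L.support_subset i v hv).1
  pairwise_disjoint := by
    have ha : ∀ i, a ∉ (L.walk i).support := fun i h => (L.support_subset i a h).2 rfl
    intro i j hij
    induction i using Fin.cases <;> induction j using Fin.cases
    · exact absurd rfl hij
    · exact fun v hv hv' => ha _ (List.mem_singleton.1 hv ▸ hv')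
    · exact fun v hv hv' => ha _ (List.mem_singleton.1 hv' ▸ hv)
    · exact L.pairwise_disjoint fun h => hij (congrArg Fin.succ h)

theorem glue [Finite V] {k : ℕ} (hS : G.Separates U A B S) (hSk : S.ncard = k)
    (L : G.Linkage U A S k) (R : G.Linkage U B S k) : Nonempty (G.Linkage U A B k) := by
  classical
  choose σ hσS P hP hPL hPS using fun i =>
    (L.walk i).exists_isPath_to_first_mem ⟨_, L.dst_mem i, (L.walk i).end_mem_support⟩
  choose τ hτS Q hQ hQR hQS using fun j =>
    (R.walk j).exists_isPath_to_first_mem ⟨_, R.dst_mem j, (R.walk j).end_mem_support⟩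
  have hσ : Injective σ :=
    injective_of_pairwise_disjoint L.pairwise_disjoint fun i => hPL i (P i).end_mem_support
  have hτ : Injective τ :=
    injective_of_pairwise_disjoint R.pairwise_disjoint fun j => hQR j (Q j).end_mem_support
  have hτS' : Set.range τ = S := range_eq_of_injective_of_ncard_eq hτ hτS hSk
  choose π hπ using fun i => hτS'.symm ▸ hσS i
  have hPU : ∀ i, ∀ v ∈ (P i).support, v ∈ U := fun i v hv => L.support_subset i v (hPL i hv)
  have hQU : ∀ j, ∀ v ∈ (Q j).support, v ∈ U := fun j v hv => R.support_subset j v (hQR j hv)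
  have hcross : ∀ i j v, v ∈ (P i).support → v ∈ (Q j).support → σ i = τ j := fun i j _ =>
    hS.eq_of_mem_support (L.src_mem i) (R.src_mem j) (hσS i) (hτS j) (hP i) (hQ j) (hPU i)
      (hQU j) (hPS i) (hQS j)
  have hmem : ∀ i v, v ∈ ((P i).append ((Q (π i)).reverse.copy (hπ i) rfl)).support ↔
      v ∈ (P i).support ∨ v ∈ (Q (π i)).support := by
    simp [Walk.mem_support_append_iff]
  refine ⟨{ src := L.src, dst := R.src ∘ π,
             walk := (fun i => (P i).append ((Q (π i)).reverse.copy (hπ i) rfl)),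
             src_mem := L.src_mem, dst_mem := (fun i => R.src_mem (π i)),
             support_subset := (fun i v hv => ?_),
             pairwise_disjoint := (fun i j hij v hvi hvj => ?_) }⟩
  · exact ((hmem i v).1 hv).elim (hPU i v) (hQU (π i) v)
  · refine hij (hσ ?_)
    rcases (hmem i v).1 hvi with hi | hi <;> rcases (hmem j v).1 hvj with hj | hj
    · rw [eq_of_mem_of_pairwise_disjoint L.pairwise_disjoint (hPL i hi) (hPL j hj)]
    · exact (hcross i _ v hi hj).trans (hπ j)
    · exact ((hcross j _ v hj hi).trans (hπ i)).symm
    · rw [← hπ i, ← hπ j,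
        eq_of_mem_of_pairwise_disjoint R.pairwise_disjoint (hQR _ hi) (hQR _ hj)]

end Linkage

lemma minSeparatorCard_le_diff_singleton_add_one {c : V} (hc : c ∈ U) :
    G.minSeparatorCard U A B ≤ G.minSeparatorCard (U \ {c}) (A \ {c}) (B \ {c}) + 1 := by
  obtain ⟨T, hTU, hT, hTc⟩ := G.exists_isMinSeparator (U \ {c}) (A \ {c}) (B \ {c})
  calc G.minSeparatorCard U A B ≤ (insert c T).ncard :=
        minSeparatorCard_le (Set.insert_subset hc (hTU.trans Set.sdiff_subset))
          hT.insert_of_diff_singleton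
    _ ≤ _ := hTc ▸ Set.ncard_insert_le c T

lemma insert_eq_or_eq_of_separates
    (hmin : ∀ S, G.IsMinSeparator U A B S → S = A ∨ S = B) {x : V} (hxT : insert x T ⊆ U)
    (hsep : G.Separates U A B (insert x T)) (hT : T.ncard < G.minSeparatorCard U A B) :
    insert x T = A ∨ insert x T = B :=
  hmin _ ⟨hxT, hsep, le_antisymm (by have := Set.ncard_insert_le x T; omega)
    (minSeparatorCard_le hxT hsep)⟩

lemma minSeparatorCard_le_diff_singleton
    (hmin : ∀ S, G.IsMinSeparator U A B S → S = A ∨ S = B)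
    {c : V} (hcU : c ∈ U) (hcA : c ∉ A) (hcB : c ∉ B) :
    G.minSeparatorCard U A B ≤ G.minSeparatorCard (U \ {c}) A B := by
  by_contra! hlt
  obtain ⟨T, hTU, hT, hTc⟩ := G.exists_isMinSeparator (U \ {c}) A B
  have hsep : G.Separates U A B (insert c T) := Separates.insert_of_diff_singleton <| by
    rwa [Set.sdiff_singleton_eq_self hcA, Set.sdiff_singleton_eq_self hcB]
  rcases insert_eq_or_eq_of_separates hmin (Set.insert_subset hcU (hTU.trans Set.sdiff_subset))
    hsep (hTc ▸ hlt) with h | h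
  · exact hcA (h ▸ Set.mem_insert c T)
  · exact hcB (h ▸ Set.mem_insert c T)

lemma minSeparatorCard_le_deleteEdges_or_le_one
    (hmin : ∀ S, G.IsMinSeparator U A B S → S = A ∨ S = B)
    (hAB : Disjoint A B) (hA : A ⊆ U) (hB : B ⊆ U) {x y : V} (hx : x ∈ A) (hy : y ∈ B) :
    G.minSeparatorCard U A B ≤ (G.deleteEdges {s(x, y)}).minSeparatorCard U A B ∨
      G.minSeparatorCard U A B ≤ 1 := by
  refine or_iff_not_imp_left.2 fun hlt => ?_
  obtain ⟨T, hTU, hT, hTc⟩ := (G.deleteEdges {s(x, y)}).exists_isMinSeparator U A B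
  rw [not_le, ← hTc] at hlt
  have hxT := hT.insert_of_deleteEdges
  have hyT :=
    (Sym2.eq_swap ▸ hT : (G.deleteEdges {s(y, x)}).Separates U A B T).insert_of_deleteEdges
  have hTA : insert x T = A :=
    (insert_eq_or_eq_of_separates hmin (Set.insert_subset (hA hx) hTU) hxT hlt).resolve_right
      fun h => Set.disjoint_left.1 hAB hx (h ▸ Set.mem_insert x T)
  have hTB : insert y T = B :=
    (insert_eq_or_eq_of_separates hmin (Set.insert_subset (hB hy) hTU) hyT hlt).resolve_left
      fun h => Set.disjoint_left.1 hAB (h ▸ Set.mem_insert y T) hy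
  have hT0 : T = ∅ := Set.eq_empty_of_forall_notMem fun t ht =>
    Set.disjoint_left.1 hAB (hTA ▸ Set.mem_insert_of_mem x ht) (hTB ▸ Set.mem_insert_of_mem y ht)
  calc G.minSeparatorCard U A B ≤ (insert x T).ncard :=
        minSeparatorCard_le (Set.insert_subset (hA hx) hTU) hxT
    _ ≤ T.ncard + 1 := Set.ncard_insert_le x T
    _ = 1 := by simp [hT0]

lemma exists_adj_of_subset_union (hAB : Disjoint A B) (hU : U ⊆ A ∪ B)
    (hκ : 0 < G.minSeparatorCard U A B) : ∃ x ∈ A, ∃ y ∈ B, G.Adj x y := by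
  have hne : ¬ G.Separates U A B ∅ := fun h => by
    have := minSeparatorCard_le (Set.empty_subset U) h
    rw [Set.ncard_empty] at this
    omega
  simp only [Separates, not_forall] at hne
  obtain ⟨a, b, w, ha, hb, hw, -⟩ := hne
  obtain ⟨d, hd, hdA, hdA'⟩ := w.exists_boundary_dart A ha (Set.disjoint_right.1 hAB hb)
  exact ⟨d.fst, hdA, d.snd,
    (hU (hw _ (w.dart_snd_mem_support_of_mem_darts hd))).resolve_left hdA', d.adj⟩

lemma nonempty_linkage_to_separator [Finite V] (hA : A ⊆ U) (hB : B ⊆ U)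
    (hS : G.IsMinSeparator U A B S) (hSB : S ≠ B)
    (ih : ∀ U' ⊂ U, ∀ A' B', A' ⊆ U' → B' ⊆ U' →
      Nonempty (G.Linkage U' A' B' (G.minSeparatorCard U' A' B'))) :
    Nonempty (G.Linkage U A S S.ncard) := by
  obtain ⟨hSU, hsep, hSκ⟩ := hS
  obtain ⟨b, hb, hbS⟩ : ∃ b ∈ B, b ∉ S := by
    by_contra! hBS
    exact hSB (Set.eq_of_subset_of_ncard_le hBS (hSκ ▸ minSeparatorCard_le_ncard_right hB)).symm
  have hlt : G.sideOf U S A ∪ S ⊂ U :=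
    (Set.ssubset_iff_of_subset (Set.union_subset sideOf_subset hSU)).2
      ⟨b, hB hb, fun h => h.elim (notMem_sideOf hsep hb hbS) hbS⟩
  obtain ⟨L⟩ := ih _ hlt A S ((subset_sideOf hA).trans Set.subset_union_left) Set.subset_union_right
  exact ⟨(L.take (hSκ ▸ minSeparatorCard_le_sideOf hSU hsep)).mono hlt.subset⟩

theorem menger [Finite V] (G : SimpleGraph V) {U A B : Set V} (hA : A ⊆ U) (hB : B ⊆ U) :
    Nonempty (G.Linkage U A B (G.minSeparatorCard U A B)) := by
  induction hn : U.ncard + G.edgeSet.ncard using Nat.strong_induction_on generalizing G U A B with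
  | _ n ih =>
  have ihU : ∀ U' ⊂ U, ∀ A' B', A' ⊆ U' → B' ⊆ U' →
      Nonempty (G.Linkage U' A' B' (G.minSeparatorCard U' A' B')) := fun U' hU' A' B' hA' hB' =>
    ih _ (hn ▸ Nat.add_lt_add_right (Set.ncard_lt_ncard hU') _) G hA' hB' rfl
  obtain hκ | hκ := (G.minSeparatorCard U A B).eq_zero_or_pos
  · exact hκ ▸ ⟨.empty⟩
  by_cases hAB : (A ∩ B).Nonempty
  · obtain ⟨a, haA, haB⟩ := hAB
    obtain ⟨L⟩ := ihU (U \ {a}) (Set.sdiff_singleton_ssubset.2 (hA haA)) (A \ {a}) (B \ {a})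
      (Set.sdiff_subset_sdiff_left hA) (Set.sdiff_subset_sdiff_left hB)
    exact ⟨(L.cons haA haB (hA haA)).take (minSeparatorCard_le_diff_singleton_add_one (hA haA))⟩
  by_cases hsplit : ∃ S, G.IsMinSeparator U A B S ∧ S ≠ A ∧ S ≠ B
  · obtain ⟨S, hS, hSA, hSB⟩ := hsplit
    obtain ⟨L⟩ := nonempty_linkage_to_separator hA hB hS hSB ihU
    obtain ⟨R⟩ := nonempty_linkage_to_separator hB hA hS.symm hSA ihU
    exact hS.2.2 ▸ Linkage.glue hS.2.1 rfl L R
  have hmin : ∀ S, G.IsMinSeparator U A B S → S = A ∨ S = B := fun S hS =>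
    or_iff_not_imp_left.2 fun hSA => by_contra fun hSB => hsplit ⟨S, hS, hSA, hSB⟩
  by_cases hc : ∃ c ∈ U, c ∉ A ∧ c ∉ B
  · obtain ⟨c, hcU, hcA, hcB⟩ := hc
    obtain ⟨L⟩ := ihU (U \ {c}) (Set.sdiff_singleton_ssubset.2 hcU) A B
      (Set.subset_sdiff_singleton hA hcA) (Set.subset_sdiff_singleton hB hcB)
    exact ⟨(L.take (minSeparatorCard_le_diff_singleton hmin hcU hcA hcB)).mono Set.sdiff_subset⟩
  have hAB' : Disjoint A B :=
    Set.disjoint_iff_inter_eq_empty.2 (Set.not_nonempty_iff_eq_empty.1 hAB)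
  have hU : U ⊆ A ∪ B := fun c hcU =>
    or_iff_not_imp_left.2 fun hcA => by_contra fun hcB => hc ⟨c, hcU, hcA, hcB⟩
  obtain ⟨x, hx, y, hy, hxy⟩ := exists_adj_of_subset_union hAB' hU hκ
  rcases minSeparatorCard_le_deleteEdges_or_le_one hmin hAB' hA hB hx hy with h | h
  · have hlt : U.ncard + (G.deleteEdges {s(x, y)}).edgeSet.ncard < n := by
      rw [← hn, edgeSet_deleteEdges]
      exact Nat.add_lt_add_left (Set.ncard_sdiff_singleton_lt_of_mem (G.mem_edgeSet.2 hxy)) _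
    obtain ⟨L⟩ := ih _ hlt (G.deleteEdges {s(x, y)}) hA hB rfl
    exact ⟨(L.take h).mapLe (G.deleteEdges_le _)⟩
  · exact ⟨(Linkage.single (.cons hxy .nil) hx hy (by simp [hA hx, hB hy])).take h⟩

theorem le_two_mul_ncard_of_separates [Finite V] {n : ℕ} {B T : Set V} {a b c d : Fin n → V}
    (P : ∀ i, G.Walk (a i) (b i)) (Q : ∀ i, G.Walk (c i) (d i))
    (hP : Pairwise (List.Disjoint on fun i => (P i).support))
    (hQ : Pairwise (List.Disjoint on fun i => (Q i).support))
    (hb : ∀ i, b i ∈ B) (hc : ∀ i, c i ∈ B) (hB : B.ncard = n)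
    (hT : G.Separates Set.univ (Set.range a) (Set.range d) T) : n ≤ 2 * T.ncard := by
  by_contra! hlt
  set I := {i | ∃ v ∈ T, v ∈ (P i).support}
  set J := {j | ∃ v ∈ T, v ∈ (Q j).support}
  have hcard : (b '' I ∪ c '' J).ncard < B.ncard := calc
    _ ≤ (b '' I).ncard + (c '' J).ncard := Set.ncard_union_le _ _
    _ ≤ I.ncard + J.ncard := add_le_add (Set.ncard_image_le) (Set.ncard_image_le)
    _ ≤ T.ncard + T.ncard := add_le_add (ncard_setOf_exists_mem_le hP T)
      (ncard_setOf_exists_mem_le hQ T)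
    _ < B.ncard := by omega
  obtain ⟨x, hxB, hx⟩ := Set.exists_mem_notMem_of_ncard_lt_ncard hcard
  have hbB := range_eq_of_injective_of_ncard_eq
    (injective_of_pairwise_disjoint hP fun i => (P i).end_mem_support) hb hB
  have hcB := range_eq_of_injective_of_ncard_eq
    (injective_of_pairwise_disjoint hQ fun j => (Q j).start_mem_support) hc hB
  obtain ⟨i, rfl⟩ := hbB ▸ hxB
  obtain ⟨j, hj⟩ := hcB ▸ hxB
  obtain ⟨t, ht, htw⟩ := hT ((P i).append ((Q j).copy hj rfl)) ⟨i, rfl⟩ ⟨j, rfl⟩ (by simp)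
  rw [Walk.mem_support_append_iff, Walk.support_copy] at htw
  exact hx (htw.imp (fun h => ⟨i, ⟨t, ht, h⟩, rfl⟩) (fun h => ⟨j, ⟨t, ht, h⟩, hj⟩))

end SimpleGraph

theorem stmt_0_general {V : Type} [Fintype V] (G : SimpleGraph V) (A B C : Set V)
    (k : ℕ) (hB : B.ncard = 2 * k - 1)
    (P Q : Fin (2 * k - 1) → PathIn V G)
    (hP : ∀ i, (P i).a ∈ A ∧ (P i).b ∈ B)
    (hPdisj : ∀ i j, i ≠ j → ∀ v, v ∈ (P i).walk.support → v ∉ (P j).walk.support)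
    (hQ : ∀ i, (Q i).a ∈ B ∧ (Q i).b ∈ C)
    (hQdisj : ∀ i j, i ≠ j → ∀ v, v ∈ (Q i).walk.support → v ∉ (Q j).walk.support) :
    ∃ R : Fin k → PathIn V G,
      (∀ i, (R i).a ∈ A ∧ (R i).b ∈ C) ∧
      (∀ i j, i ≠ j → ∀ v, v ∈ (R i).walk.support → v ∉ (R j).walk.support) := by
  classical
  have hκ : k ≤ G.minSeparatorCard Set.univ (Set.range (P · |>.a)) (Set.range (Q · |>.b)) :=
    SimpleGraph.le_minSeparatorCard_iff.2 fun T _ hT => by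
      have := SimpleGraph.le_two_mul_ncard_of_separates (fun i => (P i).walk)
        (fun i => (Q i).walk) hPdisj hQdisj (fun i => (hP i).2) (fun i => (hQ i).1) hB hT
      omega
  obtain ⟨L⟩ := G.menger (Set.subset_univ _) (Set.subset_univ _)
  let L' := L.take hκ
  refine ⟨fun i => ⟨_, _, (L'.walk i).bypass, (L'.walk i).bypass_isPath⟩, fun i => ⟨?_, ?_⟩,
    fun i j hij v hvi hvj => L'.pairwise_disjoint hij
      ((L'.walk i).support_bypass_subset_support hvi)
      ((L'.walk j).support_bypass_subset_support hvj)⟩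
  · obtain ⟨j, hj⟩ := L'.src_mem i
    exact (hj ▸ (hP j).1 : L'.src i ∈ A)
  · obtain ⟨j, hj⟩ := L'.dst_mem i
    exact (hj ▸ (hQ j).2 : L'.dst i ∈ C)

/-- If `|B| = 2k-1`, there are `2k-1` pairwise vertex-disjoint `A`–`B` paths
and `2k-1` pairwise vertex-disjoint `B`–`C` paths, then there are `k` pairwise vertex-disjoint
`A`–`C` paths. -/
theorem stmt_0 {V : Type} [Fintype V] (G : SimpleGraph V) (A B C : Set V)
    (k : ℕ) (hk : 0 < k) (hB : B.ncard = 2 * k - 1)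
    (P Q : Fin (2 * k - 1) → PathIn V G)
    (hP : ∀ i, (P i).a ∈ A ∧ (P i).b ∈ B)
    (hPdisj : ∀ i j, i ≠ j → ∀ v, v ∈ (P i).walk.support → v ∉ (P j).walk.support)
    (hQ : ∀ i, (Q i).a ∈ B ∧ (Q i).b ∈ C)
    (hQdisj : ∀ i j, i ≠ j → ∀ v, v ∈ (Q i).walk.support → v ∉ (Q j).walk.support) :
    ∃ R : Fin k → PathIn V G,
      (∀ i, (R i).a ∈ A ∧ (R i).b ∈ C) ∧
      (∀ i j, i ≠ j → ∀ v, v ∈ (R i).walk.support → v ∉ (R j).walk.support) :=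
  stmt_0_general G A B C k hB P Q hP hPdisj hQ hQdisj
end

section
/- Let G be a graph containing a singular X–Y linkage P, i.e., a set of |X| = |Y| = k vertex-disjoint paths each with one end in X and the other in Y, such that the paths in P together use all vertices of G and P is the unique X–Y linkage in G. Then G has path-width at most |P|. -/
/-- `P` is an `X`–`Y` linkage: `|X| = |Y|` many pairwise vertex-disjoint paths, each with
first endpoint in `X` and second endpoint in `Y`. -/
def IsLinkage {V : Type} (G : SimpleGraph V) (X Y : Set V) (P : Set (PathIn V G)) : Prop :=
  P.Finite ∧ P.ncard = X.ncard ∧ X.ncard = Y.ncard ∧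
  (∀ p ∈ P, p.a ∈ X ∧ p.b ∈ Y) ∧
  (∀ p ∈ P, ∀ q ∈ P, p ≠ q → ∀ v, v ∈ p.walk.support → v ∉ q.walk.support)

/-- `P` is a singular `X`–`Y` linkage: its paths cover all vertices of `G` and it is the
unique `X`–`Y` linkage in `G`. -/
def IsSingularLinkage {V : Type} (G : SimpleGraph V) (X Y : Set V)
    (P : Set (PathIn V G)) : Prop :=
  IsLinkage G X Y P ∧ (∀ v : V, ∃ p ∈ P, v ∈ p.walk.support) ∧
  ∀ Q : Set (PathIn V G), IsLinkage G X Y Q → Q = P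

/-- A path-decomposition of `G` with bags `bag 0, …, bag (n-1)`. -/
def IsPathDecomp {V : Type} (G : SimpleGraph V) (n : ℕ) (bag : Fin n → Set V) : Prop :=
  (∀ v : V, ∃ i, v ∈ bag i) ∧
  (∀ u v : V, G.Adj u v → ∃ i, u ∈ bag i ∧ v ∈ bag i) ∧
  (∀ i j k : Fin n, i ≤ j → j ≤ k → bag i ∩ bag k ⊆ bag j)

/-- `G` has path-width at most `w`. -/
def PathwidthAtMost {V : Type} (G : SimpleGraph V) (w : ℕ) : Prop :=
  ∃ (n : ℕ) (bag : Fin n → Set V), IsPathDecomp G n bag ∧ ∀ i, (bag i).ncard ≤ w + 1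

/-!
Call a path of `P` free if every neighbour of its first vertex `a` is a first vertex of `P` or the
second vertex of the path. Some path is free: otherwise pick for every path `p` a bad neighbour
`w p` of its first vertex, lying on a path `f p`; on a cycle of `f`, rerouting every `p` from its
first vertex straight to `w p` and on along `f p` yields a second linkage. Deleting the first
vertex `a` of a free path leaves a singular linkage of `G - a` from `X' = X - a (+ c)`, where `c`
is the next vertex on the path, and uniqueness survives because every linkage of `G - a` extends
back by `a`. A path-decomposition of `G - a` whose first bag contains `X'`, preceded by the bag
`X ∪ X'` (which contains `a` with all its neighbours), is one of `G` with bags of size at most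
`|X| + 1 = |P| + 1`. For the induction the whole argument is run inside induced subgraphs `G[S]`.
-/

open Set Function SimpleGraph

theorem Set.Finite.exists_nonempty_bijOn_of_mapsTo {α : Type*} {s : Set α} {f : α → α}
    (hs : s.Finite) (hne : s.Nonempty) (hf : MapsTo f s s) :
    ∃ t ⊆ s, t.Nonempty ∧ BijOn f t t := by
  refine ⟨s ∩ periodicPts f, inter_subset_left, ?_, ?_⟩
  · obtain ⟨x, hx⟩ := hne
    obtain ⟨m, n, hmn, hfmn⟩ :=
      hs.exists_lt_map_eq_of_forall_mem (f := fun n => f^[n] x) fun n => hf.iterate n hx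
    refine ⟨f^[m] x, hf.iterate m hx, mk_mem_periodicPts (n := n - m) (by omega) ?_⟩
    rw [IsPeriodicPt, IsFixedPt, ← iterate_add_apply, Nat.sub_add_cancel hmn.le]
    exact hfmn.symm
  · exact ((hs.subset inter_subset_left).injOn_iff_bijOn_of_mapsTo
      (hf.inter_inter (bijOn_periodicPts f).mapsTo)).mp
      ((bijOn_periodicPts f).injOn.mono inter_subset_right)

section

variable {V : Type} {G : SimpleGraph V}

namespace PathIn

def nil (a : V) : PathIn V G := ⟨a, a, .nil, .nil⟩

def cons (r : PathIn V G) {x : V} (h : G.Adj x r.a) (hx : x ∉ r.walk.support) : PathIn V G :=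
  ⟨x, r.b, .cons h r.walk, r.isPath.cons hx⟩

@[simp] theorem mem_support_nil {a v : V} : v ∈ (nil a : PathIn V G).walk.support ↔ v = a := by
  simp [nil]

@[simp] theorem mem_support_cons {r : PathIn V G} {x v : V} {h : G.Adj x r.a}
    {hx : x ∉ r.walk.support} : v ∈ (r.cons h hx).walk.support ↔ v = x ∨ v ∈ r.walk.support := by
  simp [cons]

theorem cons_inj {r s : PathIn V G} {x : V} {hr : G.Adj x r.a} {hs : G.Adj x s.a}
    {hxr : x ∉ r.walk.support} {hxs : x ∉ s.walk.support} (h : r.cons hr hxr = s.cons hs hxs) :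
    r = s := by
  obtain ⟨ra, rb, wr, _⟩ := r
  obtain ⟨sa, sb, ws, _⟩ := s
  simp only [cons, mk.injEq, true_and] at h
  obtain ⟨rfl, h⟩ := h
  rw [heq_iff_eq, Walk.cons.injEq] at h
  obtain ⟨rfl, h⟩ := h
  rw [heq_iff_eq] at h
  subst h
  rfl

theorem eq_nil_or_eq_cons (p : PathIn V G) :
    (∃ a, p = nil a) ∨ ∃ (r : PathIn V G) (x : V) (h : G.Adj x r.a) (hx : x ∉ r.walk.support),
      p = r.cons h hx := by
  obtain ⟨a, b, w, hp⟩ := p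
  cases w with
  | nil => exact .inl ⟨a, rfl⟩
  | cons h q =>
    rw [Walk.cons_isPath_iff] at hp
    exact .inr ⟨⟨_, b, q, hp.1⟩, a, h, hp.2, rfl⟩

theorem exists_shortcut (q : PathIn V G) {x w : V} (hw : w ∈ q.walk.support) (hwa : w ≠ q.a)
    (hxw : G.Adj x w) (hx : x ∈ q.walk.support → x = q.a) :
    ∃ r : PathIn V G, r.a = x ∧ r.b = q.b ∧ r.walk.snd = w ∧
      ∀ v ∈ r.walk.support, v = x ∨ v ∈ q.walk.support ∧ v ≠ q.a := by
  obtain ⟨q₁, q₂, -, hq₂, hq⟩ := q.isPath.mem_support_iff_exists_append.mp hw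
  have hpath : (q₁.append q₂).IsPath := hq ▸ q.isPath
  have htail : ∀ v ∈ q₂.support, v ∈ q.walk.support ∧ v ≠ q.a := by
    refine fun v hv => ⟨hq ▸ Walk.support_subset_support_append_right q₁ q₂ hv, ?_⟩
    rintro rfl
    by_cases hvw : q.a = w
    · exact hwa hvw.symm
    · exact hpath.ne_of_mem_support_of_append hvw q₁.start_mem_support hv rfl
  have hxq₂ : x ∉ q₂.support := fun h => (htail x h).2 (hx (htail x h).1)
  refine ⟨⟨x, q.b, .cons hxw q₂, hq₂.cons hxq₂⟩, rfl, rfl, Walk.snd_cons _ _, ?_⟩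
  intro v hv
  rw [Walk.support_cons, List.mem_cons] at hv
  exact hv.imp_right (htail v)

end PathIn

/-- `IsLinkage` inside `G[S]`, with the cardinality conditions replaced by surjectivity onto `X`
and `Y` (equivalent, given disjointness). -/
structure IsLinkageOn (G : SimpleGraph V) (S X Y : Set V) (P : Set (PathIn V G)) : Prop where
  support_subset : ∀ p ∈ P, ∀ v ∈ p.walk.support, v ∈ S
  image_a : PathIn.a '' P = X
  image_b : PathIn.b '' P = Y
  pairwise_disjoint : P.Pairwise fun p q => ∀ v ∈ p.walk.support, v ∉ q.walk.support

structure IsSingularOn (G : SimpleGraph V) (S X Y : Set V) (P : Set (PathIn V G)) : Prop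
    extends IsLinkageOn G S X Y P where
  covers : ∀ v ∈ S, ∃ p ∈ P, v ∈ p.walk.support
  unique : ∀ Q, IsLinkageOn G S X Y Q → Q = P

section Disjoint

variable {P : Set (PathIn V G)}
  (hP : P.Pairwise fun p q => ∀ v ∈ p.walk.support, v ∉ q.walk.support)
include hP

theorem PathIn.eq_of_mem_support_of_pairwise {p q : PathIn V G} (hp : p ∈ P) (hq : q ∈ P)
    {v : V} (hvp : v ∈ p.walk.support) (hvq : v ∈ q.walk.support) : p = q :=
  by_contra fun hpq => hP hp hq hpq v hvp hvq

theorem PathIn.injOn_a_of_pairwise : InjOn PathIn.a P := fun p hp q hq h =>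
  eq_of_mem_support_of_pairwise hP hp hq p.walk.start_mem_support
    (by rw [h]; exact q.walk.start_mem_support)

theorem PathIn.injOn_b_of_pairwise : InjOn PathIn.b P := fun p hp q hq h =>
  eq_of_mem_support_of_pairwise hP hp hq p.walk.end_mem_support
    (by rw [h]; exact q.walk.end_mem_support)

end Disjoint

namespace IsLinkageOn

variable {S X Y : Set V} {P : Set (PathIn V G)} (hP : IsLinkageOn G S X Y P)
include hP

theorem eq_of_mem_support {p q : PathIn V G} (hp : p ∈ P) (hq : q ∈ P) {v : V}
    (hvp : v ∈ p.walk.support) (hvq : v ∈ q.walk.support) : p = q :=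
  PathIn.eq_of_mem_support_of_pairwise hP.pairwise_disjoint hp hq hvp hvq

theorem injOn_a : InjOn PathIn.a P := PathIn.injOn_a_of_pairwise hP.pairwise_disjoint

theorem a_mem {p : PathIn V G} (hp : p ∈ P) : p.a ∈ X := by
  rw [← hP.image_a]
  exact mem_image_of_mem _ hp

theorem b_mem {p : PathIn V G} (hp : p ∈ P) : p.b ∈ Y := by
  rw [← hP.image_b]
  exact mem_image_of_mem _ hp

theorem source_subset : X ⊆ S := by
  rw [← hP.image_a]
  rintro _ ⟨p, hp, rfl⟩
  exact hP.support_subset p hp _ p.walk.start_mem_support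

theorem finite [Finite V] : P.Finite := (toFinite _).of_finite_image hP.injOn_a

theorem of_support_subset {S' : Set V} (h : ∀ p ∈ P, ∀ v ∈ p.walk.support, v ∈ S') :
    IsLinkageOn G S' X Y P :=
  { hP with support_subset := h }

theorem mono {S' : Set V} (h : S ⊆ S') : IsLinkageOn G S' X Y P :=
  hP.of_support_subset fun p hp v hv => h (hP.support_subset p hp v hv)

theorem insert_of_disjoint {p : PathIn V G} (hpS : ∀ v ∈ p.walk.support, v ∈ S)
    (hpP : ∀ q ∈ P, ∀ v ∈ p.walk.support, v ∉ q.walk.support) :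
    IsLinkageOn G S (insert p.a X) (insert p.b Y) (insert p P) where
  support_subset := by
    rintro q (rfl | hq)
    exacts [hpS, hP.support_subset q hq]
  image_a := by rw [image_insert_eq, hP.image_a]
  image_b := by rw [image_insert_eq, hP.image_b]
  pairwise_disjoint := pairwise_insert.2 ⟨hP.pairwise_disjoint, fun q hq _ =>
    ⟨hpP q hq, fun v hvq hvp => hpP q hq v hvp hvq⟩⟩

theorem diff_singleton {p : PathIn V G} (hp : p ∈ P) :
    IsLinkageOn G S (X \ {p.a}) (Y \ {p.b}) (P \ {p}) where
  support_subset q hq := hP.support_subset q hq.1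
  image_a := by
    rw [hP.injOn_a.image_sdiff_subset (singleton_subset_iff.2 hp), image_singleton, hP.image_a]
  image_b := by
    rw [(PathIn.injOn_b_of_pairwise hP.pairwise_disjoint).image_sdiff_subset
      (singleton_subset_iff.2 hp), image_singleton, hP.image_b]
  pairwise_disjoint := hP.pairwise_disjoint.mono sdiff_subset

theorem pairwise_disjoint_reroute {C : Set (PathIn V G)} (hCP : C ⊆ P)
    {f t : PathIn V G → PathIn V G} (hf : BijOn f C C)
    (ht : ∀ p ∈ C, ∀ v ∈ (t p).walk.support, v = p.a ∨ v ∈ (f p).walk.support ∧ v ≠ (f p).a) :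
    ((P \ C) ∪ t '' C).Pairwise fun p q => ∀ v ∈ p.walk.support, v ∉ q.walk.support := by
  have hcross : ∀ u ∈ P \ C, ∀ p ∈ C, ∀ v ∈ u.walk.support, v ∉ (t p).walk.support := by
    intro u hu p hp v hvu hvp
    rcases ht p hp v hvp with rfl | ⟨hv, -⟩
    · exact hu.2 (hP.eq_of_mem_support hu.1 (hCP hp) hvu p.walk.start_mem_support ▸ hp)
    · exact hu.2 (hP.eq_of_mem_support hu.1 (hCP (hf.mapsTo hp)) hvu hv ▸ hf.mapsTo hp)
  have hstart : ∀ p ∈ C, ∀ q ∈ C, p.a ∈ (f q).walk.support → p.a = (f q).a := fun p hp q hq h =>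
    congrArg PathIn.a
      (hP.eq_of_mem_support (hCP hp) (hCP (hf.mapsTo hq)) p.walk.start_mem_support h)
  have htC : (t '' C).Pairwise fun p q => ∀ v ∈ p.walk.support, v ∉ q.walk.support := by
    rintro _ ⟨p, hp, rfl⟩ _ ⟨q, hq, rfl⟩ hpq v hvp hvq
    have hpq : p ≠ q := fun h => hpq (h ▸ rfl)
    rcases ht p hp v hvp with hv | ⟨hvp, hvp'⟩ <;> rcases ht q hq v hvq with h | ⟨hvq, hvq'⟩
    · exact hpq (hP.injOn_a (hCP hp) (hCP hq) (hv.symm.trans h))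
    · subst hv
      exact hvq' (hstart p hp q hq hvq)
    · subst h
      exact hvp' (hstart q hq p hp hvp)
    · exact hpq (hf.injOn hp hq
        (hP.eq_of_mem_support (hCP (hf.mapsTo hp)) (hCP (hf.mapsTo hq)) hvp hvq))
  exact pairwise_union.2 ⟨hP.pairwise_disjoint.mono sdiff_subset, htC,
    fun u hu _ ⟨p, hp, htp⟩ _ =>
      htp ▸ ⟨hcross u hu p hp, fun v hvp hvu => hcross u hu p hp v hvu hvp⟩⟩

theorem reroute {C : Set (PathIn V G)} (hCP : C ⊆ P) {f t : PathIn V G → PathIn V G}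
    (hf : BijOn f C C) (hta : ∀ p ∈ C, (t p).a = p.a) (htb : ∀ p ∈ C, (t p).b = (f p).b)
    (ht : ∀ p ∈ C, ∀ v ∈ (t p).walk.support, v = p.a ∨ v ∈ (f p).walk.support ∧ v ≠ (f p).a) :
    IsLinkageOn G S X Y ((P \ C) ∪ t '' C) where
  support_subset := by
    rintro _ (⟨hu, -⟩ | ⟨p, hp, rfl⟩) v hv
    · exact hP.support_subset _ hu v hv
    · rcases ht p hp v hv with rfl | ⟨hv, -⟩
      · exact hP.support_subset p (hCP hp) _ p.walk.start_mem_support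
      · exact hP.support_subset _ (hCP (hf.mapsTo hp)) v hv
  image_a := by
    rw [image_union, image_image, image_congr hta, ← image_union, sdiff_union_of_subset hCP,
      hP.image_a]
  image_b := by
    rw [image_union, image_image, image_congr htb, ← image_image PathIn.b f C, hf.image_eq,
      ← image_union, sdiff_union_of_subset hCP, hP.image_b]
  pairwise_disjoint := hP.pairwise_disjoint_reroute hCP hf ht

end IsLinkageOn

theorem IsLinkageOn.exists_insert_cons {S X Y : Set V} {x c : V} {Q : Set (PathIn V G)}
    (hQ : IsLinkageOn G (S \ {x}) (insert c (X \ {x})) Y Q) (hxS : x ∈ S) (hxX : x ∈ X)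
    (hcX : c ∉ X) (hxc : G.Adj x c) :
    ∃ s ∈ Q, ∃ (h : G.Adj x s.a) (hx : x ∉ s.walk.support),
      IsLinkageOn G S X Y (insert (s.cons h hx) (Q \ {s})) := by
  obtain ⟨s, hs, hsc⟩ := hQ.image_a.symm ▸ mem_insert c (X \ {x})
  have hxs : x ∉ s.walk.support := fun h => (hQ.support_subset s hs x h).2 rfl
  have hxs_adj : G.Adj x s.a := hsc ▸ hxc
  have hX : insert c (X \ {x}) \ {s.a} = X \ {x} := by
    rw [hsc, insert_sdiff_self_of_notMem fun h => hcX (sdiff_subset h)]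
  refine ⟨s, hs, hxs_adj, hxs, ?_⟩
  have := ((hQ.diff_singleton hs).mono sdiff_subset).insert_of_disjoint (p := s.cons hxs_adj hxs)
    (fun v hv => (PathIn.mem_support_cons.1 hv).elim (· ▸ hxS)
      fun hv => (hQ.support_subset s hs v hv).1)
    fun q hq v hv hvq => (PathIn.mem_support_cons.1 hv).elim
      (fun h => (hQ.support_subset q hq.1 v hvq).2 h)
      fun hv => hQ.pairwise_disjoint hs hq.1 (Ne.symm hq.2) v hv hvq
  rwa [hX, show (s.cons hxs_adj hxs).a = x from rfl, insert_sdiff_self_of_mem hxX,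
    show (s.cons hxs_adj hxs).b = s.b from rfl, insert_sdiff_self_of_mem (hQ.b_mem hs)] at this

structure IsPathDecompOn (G : SimpleGraph V) (S : Set V) {n : ℕ} (bag : Fin n → Set V) :
    Prop where
  subset : ∀ i, bag i ⊆ S
  cover : ∀ v ∈ S, ∃ i, v ∈ bag i
  adj : ∀ u ∈ S, ∀ v ∈ S, G.Adj u v → ∃ i, u ∈ bag i ∧ v ∈ bag i
  interp : ∀ i j k, i ≤ j → j ≤ k → bag i ∩ bag k ⊆ bag j

theorem IsPathDecompOn.cons {S S' B : Set V} {n : ℕ} {bag : Fin (n + 1) → Set V}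
    (hbag : IsPathDecompOn G S' bag) (hS' : S' ⊆ S) (hB : B ⊆ S) (hSB : S \ S' ⊆ B)
    (hadj : ∀ u ∈ S \ S', ∀ v ∈ S, G.Adj u v → v ∈ B) (hcap : B ∩ S' ⊆ bag 0) :
    IsPathDecompOn G S (Fin.cons B bag : Fin (n + 2) → Set V) where
  subset := Fin.forall_fin_succ.2 ⟨hB, fun i => (hbag.subset i).trans hS'⟩
  cover v hv := by
    by_cases hvS' : v ∈ S'
    · obtain ⟨i, hi⟩ := hbag.cover v hvS'
      exact ⟨i.succ, hi⟩
    · exact ⟨0, hSB ⟨hv, hvS'⟩⟩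
  adj u hu v hv huv := by
    by_cases hu' : u ∈ S'
    · by_cases hv' : v ∈ S'
      · obtain ⟨i, hi⟩ := hbag.adj u hu' v hv' huv
        exact ⟨i.succ, hi⟩
      · exact ⟨0, hadj v ⟨hv, hv'⟩ u hu huv.symm, hSB ⟨hv, hv'⟩⟩
    · exact ⟨0, hSB ⟨hu, hu'⟩, hadj u ⟨hu, hu'⟩ v hv huv⟩
  interp i j k hij hjk := by
    cases j using Fin.cases with
    | zero =>
      rw [Fin.le_zero_iff.1 hij]
      exact inter_subset_left
    | succ j =>
      cases k using Fin.cases with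
      | zero => exact absurd hjk (Fin.succ_pos j).not_ge
      | succ k =>
        cases i using Fin.cases with
        | zero =>
          rintro v ⟨hvB, hvk⟩
          exact hbag.interp 0 j k (Fin.zero_le j) (Fin.succ_le_succ_iff.1 hjk)
            ⟨hcap ⟨hvB, hbag.subset k hvk⟩, hvk⟩
        | succ i =>
          exact hbag.interp i j k (Fin.succ_le_succ_iff.1 hij) (Fin.succ_le_succ_iff.1 hjk)

namespace IsSingularOn

variable {S X Y : Set V} {P : Set (PathIn V G)} (hP : IsSingularOn G S X Y P)
include hP

theorem exists_free [Finite V] (hne : P.Nonempty) :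
    ∃ p ∈ P, ∀ v ∈ S, G.Adj p.a v → v ∉ X → p.walk.snd = v := by
  have : Nonempty (PathIn V G) := hne.to_subtype.map Subtype.val
  have : Nonempty V := this.map PathIn.a
  by_contra! h
  choose! w hwS hadj hwX hsnd using h
  choose! f hfP hwf using fun p hp => hP.covers (w p) (hwS p hp)
  obtain ⟨C, hCP, ⟨c, hc⟩, hfC⟩ := hP.finite.exists_nonempty_bijOn_of_mapsTo hne hfP
  have hshort : ∀ p ∈ C, ∃ r : PathIn V G, r.a = p.a ∧ r.b = (f p).b ∧ r.walk.snd = w p ∧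
      ∀ v ∈ r.walk.support, v = p.a ∨ v ∈ (f p).walk.support ∧ v ≠ (f p).a := by
    intro p hp
    refine (f p).exists_shortcut (hwf p (hCP hp)) ?_ (hadj p (hCP hp)) fun h => ?_
    · exact fun h => hwX p (hCP hp) (h ▸ hP.a_mem (hfP _ (hCP hp)))
    · exact congrArg PathIn.a
        (hP.eq_of_mem_support (hCP hp) (hfP _ (hCP hp)) p.walk.start_mem_support h)
  choose! t hta htb htsnd ht using hshort
  have hQP := hP.unique _ (hP.reroute hCP hfC hta htb ht)
  have htc : t c ∈ P := hQP ▸ Or.inr (mem_image_of_mem t hc)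
  have htc_eq : t c = c := hP.injOn_a htc (hCP hc) (hta c hc)
  have hsnd_c := htsnd c hc
  rw [htc_eq] at hsnd_c
  exact hsnd c (hCP hc) hsnd_c

theorem diff_nil {a : V} (hp : PathIn.nil a ∈ P) :
    IsSingularOn G (S \ {a}) (X \ {a}) (Y \ {a}) (P \ {PathIn.nil a}) := by
  have hsupp : ∀ q ∈ P \ {PathIn.nil a}, ∀ v ∈ q.walk.support, v ∈ S \ {a} := by
    refine fun q hq v hv => ⟨hP.support_subset q hq.1 v hv, fun hva => hq.2 ?_⟩
    exact hP.eq_of_mem_support hq.1 hp hv (PathIn.mem_support_nil.2 hva)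
  refine ⟨(hP.diff_singleton hp).of_support_subset hsupp, fun v hv => ?_, fun Q hQ => ?_⟩
  · obtain ⟨q, hq, hvq⟩ := hP.covers v hv.1
    refine ⟨q, ⟨hq, ?_⟩, hvq⟩
    rintro rfl
    exact hv.2 (PathIn.mem_support_nil.1 hvq)
  · have haX : a ∈ X := hP.a_mem (p := PathIn.nil a) hp
    have haY : a ∈ Y := hP.b_mem (p := PathIn.nil a) hp
    have hext := (hQ.mono sdiff_subset).insert_of_disjoint (p := PathIn.nil a)
      (fun v hv => PathIn.mem_support_nil.1 hv ▸ hP.source_subset haX)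
      fun q hq v hv hvq => (hQ.support_subset q hq v hvq).2 (PathIn.mem_support_nil.1 hv)
    have hpQ : PathIn.nil a ∉ Q := fun h =>
      (hQ.support_subset _ h a (PathIn.mem_support_nil.2 rfl)).2 rfl
    rw [show (PathIn.nil a : PathIn V G).a = a from rfl, insert_sdiff_self_of_mem haX,
      show (PathIn.nil a : PathIn V G).b = a from rfl, insert_sdiff_self_of_mem haY] at hext
    rw [← hP.unique _ hext, insert_sdiff_self_of_notMem hpQ]

theorem diff_cons (r : PathIn V G) {x : V} (hxr : G.Adj x r.a) (hx : x ∉ r.walk.support)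
    (hp : r.cons hxr hx ∈ P) :
    IsSingularOn G (S \ {x}) (insert r.a (X \ {x})) Y (insert r (P \ {r.cons hxr hx})) := by
  set p := r.cons hxr hx
  have hrp : ∀ v ∈ r.walk.support, v ∈ p.walk.support := fun v hv =>
    PathIn.mem_support_cons.2 (.inr hv)
  have hxX : x ∈ X := hP.a_mem hp
  have hraX : r.a ∉ X := by
    rw [← hP.image_a]
    rintro ⟨q, hq, hqa⟩
    have hqp := hP.eq_of_mem_support hq hp q.walk.start_mem_support
      (hqa ▸ hrp _ r.walk.start_mem_support)
    have hpa : p.a = r.a := hqp ▸ hqa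
    exact hxr.ne hpa
  have hrS : ∀ v ∈ r.walk.support, v ∈ S \ {x} := fun v hv =>
    ⟨hP.support_subset p hp v (hrp v hv), fun h => hx (h ▸ hv)⟩
  have hrest : ∀ q ∈ P \ {p}, ∀ v ∈ p.walk.support, v ∉ q.walk.support := fun q hq v hvp hvq =>
    hq.2 (hP.eq_of_mem_support hq.1 hp hvq hvp)
  have hlink : IsLinkageOn G (S \ {x}) (insert r.a (X \ {x})) Y (insert r (P \ {p})) := by
    have hrestS : ∀ q ∈ P \ {p}, ∀ v ∈ q.walk.support, v ∈ S \ {x} := fun q hq v hv =>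
      ⟨hP.support_subset q hq.1 v hv, fun h => hrest q hq x (by simp [p]) (h ▸ hv)⟩
    have := ((hP.diff_singleton hp).of_support_subset hrestS).insert_of_disjoint hrS
      fun q hq v hv => hrest q hq v (hrp v hv)
    have hbY : r.b ∈ Y := hP.b_mem (p := p) hp
    rwa [show p.a = x from rfl, show p.b = r.b from rfl, insert_sdiff_self_of_mem hbY] at this
  refine ⟨hlink, fun v hv => ?_, fun Q hQ => ?_⟩
  · obtain ⟨q, hq, hvq⟩ := hP.covers v hv.1
    by_cases hqp : q = p
    · subst hqp
      exact ⟨r, mem_insert _ _, (PathIn.mem_support_cons.1 hvq).resolve_left hv.2⟩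
    · exact ⟨q, mem_insert_of_mem _ ⟨hq, hqp⟩, hvq⟩
  obtain ⟨s, hs, hxs_adj, hxs, hext⟩ := hQ.exists_insert_cons (hP.source_subset hxX) hxX hraX hxr
  set s' := s.cons hxs_adj hxs
  have hs'Q : s' ∉ Q \ {s} := fun h =>
    (hQ.support_subset _ h.1 x (PathIn.mem_support_cons.2 (.inl rfl))).2 rfl
  have hQP := hP.unique _ hext
  have hs'p : s' = p := hP.injOn_a (hQP ▸ mem_insert _ _) hp rfl
  rw [← PathIn.cons_inj hs'p, ← hs'p, ← hQP, insert_sdiff_self_of_notMem hs'Q,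
    insert_sdiff_self_of_mem hs]

theorem exists_diff [Finite V] (hS : S.Nonempty) :
    ∃ a ∈ X, ∃ (X' Y' : Set V) (P' : Set (PathIn V G)) (c : V),
      IsSingularOn G (S \ {a}) X' Y' P' ∧ X \ {a} ⊆ X' ∧ X' ⊆ insert c (X \ {a}) ∧
      ∀ v ∈ S, G.Adj a v → v ∈ X ∪ X' := by
  obtain ⟨p, hp, hfree⟩ := hP.exists_free <|
    let ⟨v, hv⟩ := hS; let ⟨p, hp, _⟩ := hP.covers v hv; ⟨p, hp⟩
  rcases p.eq_nil_or_eq_cons with ⟨a, rfl⟩ | ⟨r, x, hxr, hx, rfl⟩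
  · refine ⟨a, hP.a_mem hp, _, _, _, a, hP.diff_nil hp, subset_rfl, subset_insert _ _,
      fun v hv hav => .inl ?_⟩
    by_contra hvX
    exact hav.ne (hfree v hv hav hvX)
  · refine ⟨x, hP.a_mem hp, _, _, _, r.a, hP.diff_cons r hxr hx hp, subset_insert _ _, subset_rfl,
      fun v hv hxv => ?_⟩
    by_cases hvX : v ∈ X
    · exact .inl hvX
    · rw [← hfree v hv hxv hvX, show (r.cons hxr hx).walk.snd = r.a from Walk.snd_cons _ _]
      exact .inr (mem_insert _ _)

end IsSingularOn

theorem IsSingularOn.exists_pathDecompOn [Finite V] {S X Y : Set V} {P : Set (PathIn V G)}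
    (hP : IsSingularOn G S X Y P) :
    ∃ (n : ℕ) (bag : Fin (n + 1) → Set V),
      IsPathDecompOn G S bag ∧ X ⊆ bag 0 ∧ ∀ i, (bag i).ncard ≤ X.ncard + 1 := by
  rcases S.eq_empty_or_nonempty with rfl | hS
  · refine ⟨0, fun _ => ∅, ⟨fun _ => subset_rfl, by simp, by simp, by simp⟩,
      hP.source_subset, by simp⟩
  obtain ⟨a, haX, X', Y', P', c, hP', hXX', hX'c, hadj⟩ := hP.exists_diff hS
  have haS : a ∈ S := hP.source_subset haX
  obtain ⟨n, bag, hbag, hX'bag, hsize⟩ := hP'.exists_pathDecompOn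
  have hX'card : X'.ncard ≤ X.ncard := calc
    X'.ncard ≤ (insert c (X \ {a})).ncard := ncard_le_ncard hX'c
    _ ≤ (X \ {a}).ncard + 1 := ncard_insert_le _ _
    _ = X.ncard := ncard_sdiff_singleton_add_one haX
  refine ⟨n + 1, Fin.cons (X ∪ X') bag, hbag.cons sdiff_subset ?_ ?_ ?_ ?_, subset_union_left,
    Fin.forall_fin_succ.2 ⟨?_, fun i => (hsize i).trans (by omega)⟩⟩
  · exact union_subset hP.source_subset (hP'.source_subset.trans sdiff_subset)
  · rw [Set.sdiff_sdiff_right_self]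
    rintro v ⟨-, rfl⟩
    exact .inl haX
  · rintro u ⟨hu, hua⟩ v hv huv
    obtain rfl : u = a := by simpa [hu] using hua
    exact hadj v hv huv
  · rintro v ⟨hv | hv, hvS'⟩
    exacts [hX'bag (hXX' ⟨hv, hvS'.2⟩), hX'bag hv]
  · calc (X ∪ X').ncard ≤ (insert c X).ncard := ncard_le_ncard <|
          union_subset (subset_insert _ _) (hX'c.trans (insert_subset_insert sdiff_subset))
      _ ≤ X.ncard + 1 := ncard_insert_le _ _
termination_by S.ncard
decreasing_by exact ncard_sdiff_singleton_lt_of_mem haS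

theorem IsLinkage.isLinkageOn_univ {X Y : Set V} {P : Set (PathIn V G)} [Finite V]
    (hP : IsLinkage G X Y P) : IsLinkageOn G univ X Y P := by
  obtain ⟨-, hPX, hXY, hends, hdisj⟩ := hP
  have hsurj {Z : Set V} {e : PathIn V G → V} (he : InjOn e P) (hZ : ∀ p ∈ P, e p ∈ Z)
      (hcard : P.ncard = Z.ncard) : e '' P = Z :=
    eq_of_subset_of_ncard_le (image_subset_iff.2 hZ) (by rw [he.ncard_image, hcard])
  exact ⟨fun _ _ _ _ => trivial,
    hsurj (PathIn.injOn_a_of_pairwise hdisj) (fun p hp => (hends p hp).1) hPX,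
    hsurj (PathIn.injOn_b_of_pairwise hdisj) (fun p hp => (hends p hp).2) (hPX.trans hXY),
    hdisj⟩

theorem IsLinkageOn.isLinkage {S X Y : Set V} {P : Set (PathIn V G)} [Finite V]
    (hP : IsLinkageOn G S X Y P) (hXY : X.ncard = Y.ncard) : IsLinkage G X Y P :=
  ⟨hP.finite, by rw [← hP.image_a, hP.injOn_a.ncard_image], hXY,
    fun _ hp => ⟨hP.a_mem hp, hP.b_mem hp⟩, hP.pairwise_disjoint⟩

theorem IsSingularLinkage.isSingularOn_univ {X Y : Set V} {P : Set (PathIn V G)} [Finite V]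
    (hP : IsSingularLinkage G X Y P) : IsSingularOn G univ X Y P :=
  ⟨hP.1.isLinkageOn_univ, fun v _ => hP.2.1 v, fun Q hQ => hP.2.2 Q (hQ.isLinkage hP.1.2.2.1)⟩

theorem IsPathDecompOn.isPathDecomp_univ {n : ℕ} {bag : Fin n → Set V}
    (h : IsPathDecompOn G univ bag) : IsPathDecomp G n bag :=
  ⟨fun v => h.cover v trivial, fun u v huv => h.adj u trivial v trivial huv, h.interp⟩

end

theorem stmt_2_general {V : Type} [Fintype V] (G : SimpleGraph V) (X Y : Set V)
    (P : Set (PathIn V G)) (hP : IsSingularLinkage G X Y P) :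
    PathwidthAtMost G P.ncard := by
  obtain ⟨n, bag, hbag, -, hsize⟩ := hP.isSingularOn_univ.exists_pathDecompOn
  exact ⟨n + 1, bag, hbag.isPathDecomp_univ, hP.1.2.1 ▸ hsize⟩

/-- If `G` contains a singular `X`–`Y` linkage `P`, then `G` has path-width
at most `|P|`. -/
theorem stmt_2 {V : Type} [Fintype V] (G : SimpleGraph V) (X Y : Set V) (k : ℕ)
    (hX : X.ncard = k) (hY : Y.ncard = k)
    (P : Set (PathIn V G)) (hP : IsSingularLinkage G X Y P) :
    PathwidthAtMost G P.ncard :=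
  stmt_2_general G X Y P hP
end

section
/- Let T be a tangle of order θ in a graph G, and let Z ⊆ V(G) with |Z| < θ. Define T − Z as the set of all separations (A', B') of G − Z of order less than θ − |Z| such that there exists (A, B) ∈ T with Z ⊆ A ∩ B, A − Z = A' and B − Z = B'. Then T − Z is a tangle of order θ − |Z| in G − Z. -/
/-!
Every separation `(A', B')` of `G − Z` lifts to the separation `(A' ∪ Z, B' ∪ Z)` of `G`, whose
order exceeds that of `(A', B')` by at most `|Z|`; so `T` orients it, and the orientation
restricts to `G − Z`. Conversely, the small sides of members of `T − Z` come from small sides of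
`T` containing `Z`, and three sets containing `Z` that cover `G − Z` also cover `G`: an edge
meeting `Z` lies in whichever side contains its other endpoint.
-/

/-- `(A, B)` is a separation of `G`: both sides nonempty, together they cover all vertices,
and every edge lies inside `A` or inside `B` (i.e. `G[A] ∪ G[B] = G`). -/
def VertexSep {V : Type} (G : SimpleGraph V) (A B : Set V) : Prop :=
  A.Nonempty ∧ B.Nonempty ∧ A ∪ B = Set.univ ∧
  ∀ u v : V, G.Adj u v → (u ∈ A ∧ v ∈ A) ∨ (u ∈ B ∧ v ∈ B)

/-- `G[A₁] ∪ G[A₂] ∪ G[A₃] = G`. -/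
def Covers3 {V : Type} (G : SimpleGraph V) (A₁ A₂ A₃ : Set V) : Prop :=
  A₁ ∪ A₂ ∪ A₃ = Set.univ ∧
  ∀ u v : V, G.Adj u v →
    (u ∈ A₁ ∧ v ∈ A₁) ∨ (u ∈ A₂ ∧ v ∈ A₂) ∨ (u ∈ A₃ ∧ v ∈ A₃)

/-- `T` is a tangle of order `θ` in `G`. -/
def IsTangle {V : Type} (G : SimpleGraph V) (θ : ℕ) (T : Set (Set V × Set V)) : Prop :=
  (∀ p ∈ T, VertexSep G (Prod.fst p) (Prod.snd p) ∧ ((Prod.fst p) ∩ (Prod.snd p)).ncard < θ) ∧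
  (∀ A B : Set V, VertexSep G A B → (A ∩ B).ncard < θ → (A, B) ∈ T ∨ (B, A) ∈ T) ∧
  (∀ p₁ ∈ T, ∀ p₂ ∈ T, ∀ p₃ ∈ T, ¬ Covers3 G (Prod.fst p₁) (Prod.fst p₂) (Prod.fst p₃))

/-- The tangle `T − Z` in `G − Z`: all separations `(A', B')` of `G − Z` of order
less than `θ − |Z|` that arise from some `(A, B) ∈ T` with `Z ⊆ A ∩ B`,
`A − Z = A'` and `B − Z = B'`. -/
def TangleMinus {V : Type} (G : SimpleGraph V) (θ : ℕ) (T : Set (Set V × Set V))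
    (Z : Set V) : Set (Set ↥(Zᶜ) × Set ↥(Zᶜ)) :=
  {p | VertexSep (G.induce Zᶜ) p.1 p.2 ∧ (p.1 ∩ p.2).ncard < θ - Z.ncard ∧
    ∃ A B : Set V, (A, B) ∈ T ∧ Z ⊆ A ∩ B ∧
      p.1 = Subtype.val ⁻¹' A ∧ p.2 = Subtype.val ⁻¹' B}

def liftSide {V : Type} (Z : Set V) (A' : Set ↥(Zᶜ)) : Set V :=
  Subtype.val '' A' ∪ Z

section LiftSide

variable {V : Type} {Z : Set V}

lemma subset_liftSide (A' : Set ↥(Zᶜ)) : Z ⊆ liftSide Z A' :=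
  Set.subset_union_right

lemma preimage_val_liftSide (A' : Set ↥(Zᶜ)) : Subtype.val ⁻¹' liftSide Z A' = A' := by
  ext x
  simp [liftSide]

lemma liftSide_inter_liftSide (A' B' : Set ↥(Zᶜ)) :
    liftSide Z A' ∩ liftSide Z B' = liftSide Z (A' ∩ B') := by
  rw [liftSide, liftSide, liftSide, ← Set.inter_union_distrib_right,
    Set.image_inter Subtype.val_injective]

lemma ncard_liftSide_le (A' : Set ↥(Zᶜ)) : (liftSide Z A').ncard ≤ A'.ncard + Z.ncard :=
  (Set.ncard_union_le _ _).trans_eq <| by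
    rw [Set.ncard_image_of_injective _ Subtype.val_injective]

end LiftSide

section InduceCompl

variable {V : Type} {G : SimpleGraph V} {Z : Set V}

lemma VertexSep.symm {A B : Set V} (h : VertexSep G A B) : VertexSep G B A := by
  obtain ⟨hA, hB, hcover, hedge⟩ := h
  exact ⟨hB, hA, Set.union_comm B A ▸ hcover, fun u v huv => (hedge u v huv).symm⟩

lemma VertexSep.of_induce_compl {A B : Set V} (hA : Z ⊆ A) (hB : Z ⊆ B)
    (h : VertexSep (G.induce Zᶜ) (Subtype.val ⁻¹' A) (Subtype.val ⁻¹' B)) :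
    VertexSep G A B := by
  obtain ⟨hA', hB', hcover, hedge⟩ := h
  have hmem : ∀ v, v ∈ A ∨ v ∈ B := fun v => by
    by_cases hv : v ∈ Z
    · exact Or.inl (hA hv)
    · simpa using hcover.ge (Set.mem_univ (⟨v, hv⟩ : ↥(Zᶜ)))
  refine ⟨hA'.image _ |>.mono (Set.image_preimage_subset _ _),
    hB'.image _ |>.mono (Set.image_preimage_subset _ _),
    Set.eq_univ_of_forall hmem, fun u v huv => ?_⟩
  by_cases hu : u ∈ Z
  · rcases hmem v with hv | hv
    exacts [Or.inl ⟨hA hu, hv⟩, Or.inr ⟨hB hu, hv⟩]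
  by_cases hv : v ∈ Z
  · rcases hmem u with hu' | hu'
    exacts [Or.inl ⟨hu', hA hv⟩, Or.inr ⟨hu', hB hv⟩]
  exact hedge ⟨u, hu⟩ ⟨v, hv⟩ huv

lemma covers3_of_induce_compl {A₁ A₂ A₃ : Set V} (h₁ : Z ⊆ A₁) (h₂ : Z ⊆ A₂) (h₃ : Z ⊆ A₃)
    (h : Covers3 (G.induce Zᶜ) (Subtype.val ⁻¹' A₁) (Subtype.val ⁻¹' A₂)
      (Subtype.val ⁻¹' A₃)) :
    Covers3 G A₁ A₂ A₃ := by
  obtain ⟨hcover, hedge⟩ := h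
  have hmem : ∀ v, v ∈ A₁ ∨ v ∈ A₂ ∨ v ∈ A₃ := fun v => by
    by_cases hv : v ∈ Z
    · exact Or.inl (h₁ hv)
    · simpa [or_assoc] using hcover.ge (Set.mem_univ (⟨v, hv⟩ : ↥(Zᶜ)))
  refine ⟨Set.eq_univ_of_forall fun v => by simpa [or_assoc] using hmem v, fun u v huv => ?_⟩
  by_cases hu : u ∈ Z
  · rcases hmem v with hv | hv | hv
    exacts [Or.inl ⟨h₁ hu, hv⟩, Or.inr (Or.inl ⟨h₂ hu, hv⟩), Or.inr (Or.inr ⟨h₃ hu, hv⟩)]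
  by_cases hv : v ∈ Z
  · rcases hmem u with hu' | hu' | hu'
    exacts [Or.inl ⟨hu', h₁ hv⟩, Or.inr (Or.inl ⟨hu', h₂ hv⟩), Or.inr (Or.inr ⟨hu', h₃ hv⟩)]
  exact hedge ⟨u, hu⟩ ⟨v, hv⟩ huv

end InduceCompl

theorem stmt_3_general {V : Type} (G : SimpleGraph V) (θ : ℕ)
    (T : Set (Set V × Set V)) (hT : IsTangle G θ T)
    (Z : Set V) :
    IsTangle (G.induce Zᶜ) (θ - Z.ncard) (TangleMinus G θ T Z) := by
  obtain ⟨-, hcomplete, hsmall⟩ := hT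
  refine ⟨fun p hp => ⟨hp.1, hp.2.1⟩, fun A' B' hsep' hord' => ?_, ?_⟩
  · have hsep : VertexSep G (liftSide Z A') (liftSide Z B') :=
      .of_induce_compl (subset_liftSide A') (subset_liftSide B')
        (by rwa [preimage_val_liftSide, preimage_val_liftSide])
    have hord : (liftSide Z A' ∩ liftSide Z B').ncard < θ := by
      have := ncard_liftSide_le (A' ∩ B')
      rw [liftSide_inter_liftSide]
      omega
    have hZ : Z ⊆ liftSide Z A' ∩ liftSide Z B' :=
      Set.subset_inter (subset_liftSide A') (subset_liftSide B')
    rcases hcomplete _ _ hsep hord with h | h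
    · exact .inl ⟨hsep', hord', _, _, h, hZ,
        (preimage_val_liftSide A').symm, (preimage_val_liftSide B').symm⟩
    · exact .inr ⟨hsep'.symm, Set.inter_comm A' B' ▸ hord', _, _, h,
        Set.inter_comm (liftSide Z A') _ ▸ hZ,
        (preimage_val_liftSide B').symm, (preimage_val_liftSide A').symm⟩
  · rintro ⟨_, _⟩ ⟨-, -, A₁, B₁, h₁, hZ₁, rfl, -⟩ ⟨_, _⟩ ⟨-, -, A₂, B₂, h₂, hZ₂, rfl, -⟩
      ⟨_, _⟩ ⟨-, -, A₃, B₃, h₃, hZ₃, rfl, -⟩ hcover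
    exact hsmall _ h₁ _ h₂ _ h₃ <| covers3_of_induce_compl
      (hZ₁.trans Set.inter_subset_left) (hZ₂.trans Set.inter_subset_left)
      (hZ₃.trans Set.inter_subset_left) hcover

/-- If `T` is a tangle of order `θ` in `G` and `|Z| < θ`, then
`T − Z` is a tangle of order `θ − |Z|` in `G − Z`. -/
theorem stmt_3 {V : Type} [Fintype V] (G : SimpleGraph V) (θ : ℕ)
    (T : Set (Set V × Set V)) (hT : IsTangle G θ T)
    (Z : Set V) (hZ : Z.ncard < θ) :
    IsTangle (G.induce Zᶜ) (θ - Z.ncard) (TangleMinus G θ T Z) :=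
  stmt_3_general G θ T hT Z
end

section
/- Let G be a graph of path-width at most k in which every vertex lies on one of d pairwise vertex-disjoint paths P_1, …, P_d whose endpoint sets are X and Y. Suppose the only X–Y linkage in G is {P_1,…,P_d}. Then G admits a path-decomposition (X_0,…,X_n) of width at most d with X ⊆ X_0. -/
open SimpleGraph

/-! ### Auxiliary material -/

/-- A walk is determined by its support. -/
theorem walk_eq_of_support_eq {V : Type} {G : SimpleGraph V} :
    ∀ {a b : V} (p q : G.Walk a b), p.support = q.support → p = q := by
  intro a b p
  induction p with
  | nil =>
    intro q h
    cases q with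
    | nil => rfl
    | cons h' q' =>
      exfalso
      simp only [Walk.support_nil, Walk.support_cons, List.cons.injEq] at h
      exact Walk.support_ne_nil q' h.2.symm
  | cons hadj p' ih =>
    intro q h
    cases q with
    | nil =>
      exfalso
      simp only [Walk.support_nil, Walk.support_cons, List.cons.injEq] at h
      exact Walk.support_ne_nil p' h.2
    | cons hadj' q' =>
      simp only [Walk.support_cons, List.cons.injEq] at h
      obtain ⟨-, h2⟩ := h
      have hv := h2
      rw [p'.support_eq_cons, q'.support_eq_cons] at hv
      obtain ⟨rfl, -⟩ := List.cons.injEq _ _ _ _ ▸ hv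
      rw [ih q' h2]

/-- In a path, the start does not reappear in the part of the walk after `u`. -/
theorem start_not_mem_dropUntil_support {V : Type} [DecidableEq V] {G : SimpleGraph V} {s t u : V}
    {w : G.Walk s t} (hw : w.IsPath) (h : u ∈ w.support) (hus : u ≠ s) :
    s ∉ (w.dropUntil u h).support := by
  intro hs
  have hs' : s ∈ u :: (w.dropUntil u h).support.tail := by
    rw [← (w.dropUntil u h).support_eq_cons]; exact hs
  cases hs' with
  | head => exact hus rfl
  | tail _ h' =>
    have hnd := hw.support_nodup
    rw [← w.take_spec h, Walk.support_append] at hnd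
    have hdisj := List.disjoint_of_nodup_append hnd
    exact hdisj ((w.takeUntil u h).start_mem_support) h'

/-- Relativized linkage: vertex-disjoint `X`–`Y` paths all of whose vertices lie in `S`. -/
structure LinkIn {V : Type} (G : SimpleGraph V) (S X Y : Set V)
    (P : Set (PathIn V G)) : Prop where
  fin : P.Finite
  cardPX : P.ncard = X.ncard
  cardXY : X.ncard = Y.ncard
  ends : ∀ p ∈ P, p.a ∈ X ∧ p.b ∈ Y
  disj : ∀ p ∈ P, ∀ q ∈ P, p ≠ q → ∀ v, v ∈ p.walk.support → v ∉ q.walk.support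
  sub : ∀ p ∈ P, ∀ v ∈ p.walk.support, v ∈ S

/-- Relativized singular linkage. -/
structure SingIn {V : Type} (G : SimpleGraph V) (S X Y : Set V)
    (P : Set (PathIn V G)) : Prop where
  link : LinkIn G S X Y P
  cover : ∀ v ∈ S, ∃ p ∈ P, v ∈ p.walk.support
  uniq : ∀ Q, LinkIn G S X Y Q → Q = P

namespace LinkIn

variable {V : Type} [Fintype V] {G : SimpleGraph V} {S X Y : Set V} {P : Set (PathIn V G)}

theorem eq_of_mem (h : LinkIn G S X Y P) {p q : PathIn V G} (hp : p ∈ P) (hq : q ∈ P)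
    {v : V} (hvp : v ∈ p.walk.support) (hvq : v ∈ q.walk.support) : p = q := by
  by_contra hne
  exact h.disj p hp q hq hne v hvp hvq

theorem aInjOn (h : LinkIn G S X Y P) : Set.InjOn PathIn.a P := by
  intro p hp q hq hpq
  refine h.eq_of_mem hp hq (p.walk.start_mem_support) ?_
  rw [hpq]; exact q.walk.start_mem_support

theorem X_eq (h : LinkIn G S X Y P) : X = PathIn.a '' P := by
  have hsub : PathIn.a '' P ⊆ X := by
    rintro - ⟨p, hp, rfl⟩
    exact (h.ends p hp).1
  have hcard : X.ncard ≤ (PathIn.a '' P).ncard := by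
    rw [Set.ncard_image_of_injOn h.aInjOn, ← h.cardPX]
  exact (Set.eq_of_subset_of_ncard_le hsub hcard (Set.toFinite X)).symm

theorem X_sub (h : LinkIn G S X Y P) : X ⊆ S := by
  rw [h.X_eq]
  rintro - ⟨p, hp, rfl⟩
  exact h.sub p hp p.a p.walk.start_mem_support

end LinkIn

theorem PathIn.ext' {V : Type} {G : SimpleGraph V} {p q : PathIn V G}
    (ha : p.a = q.a) (hb : p.b = q.b) (hw : p.walk.support = q.walk.support) : p = q := by
  obtain ⟨pa, pb, pw, hp⟩ := p
  obtain ⟨qa, qb, qw, hq⟩ := q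
  dsimp only at ha hb hw
  subst ha
  subst hb
  obtain rfl := walk_eq_of_support_eq pw qw hw
  rfl

section Main

variable {V : Type} [Fintype V] {G : SimpleGraph V}

theorem exists_good {S X Y : Set V} {P : Set (PathIn V G)}
    (hS : SingIn G S X Y P) (hne : P.Nonempty) :
    ∃ p ∈ P, ∀ v ∈ S, G.Adj p.a v → v ∈ X ∨ v ∈ p.walk.support := by
  classical
  have hL := hS.link
  by_contra hbad
  push_neg at hbad
  have hchoice : ∀ p : PathIn V G, ∃ vq : V × PathIn V G, p ∈ P →
      vq.2 ∈ P ∧ vq.2 ≠ p ∧ vq.1 ∈ vq.2.walk.support ∧ G.Adj p.a vq.1 ∧ vq.1 ∉ X ∧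
        vq.1 ∉ p.walk.support := by
    intro p
    by_cases hp : p ∈ P
    · obtain ⟨v, hvS, hadj, hvX, hvp⟩ := hbad p hp
      obtain ⟨q, hq, hvq⟩ := hS.cover v hvS
      have hqp : q ≠ p := fun h => hvp (h ▸ hvq)
      exact ⟨(v, q), fun _ => ⟨hq, hqp, hvq, hadj, hvX, hvp⟩⟩
    · exact ⟨(p.a, p), fun h => absurd h hp⟩
  choose F hF using hchoice
  set σ : PathIn V G → PathIn V G := fun p => (F p).2 with hσdef
  set vf : PathIn V G → V := fun p => (F p).1 with hvfdef
  obtain ⟨p₀, hp₀⟩ := hne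
  have hiter : ∀ t : ℕ, σ^[t] p₀ ∈ P := by
    intro t
    induction t with
    | zero => exact hp₀
    | succ t ih => rw [Function.iterate_succ_apply']; exact (hF _ ih).1
  have hnotinj : ¬ Function.Injective (fun t : ℕ => σ^[t] p₀) := by
    intro hinj
    exact (Set.infinite_range_of_injective hinj)
      (hL.fin.subset (by rintro - ⟨t, rfl⟩; exact hiter t))
  obtain ⟨i0, j0, hij, hne'⟩ := Function.not_injective_iff.mp hnotinj
  obtain ⟨i, m, hm, hcyc⟩ : ∃ i m : ℕ, 0 < m ∧ σ^[m] (σ^[i] p₀) = σ^[i] p₀ := by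
    rcases Ne.lt_or_gt hne' with hlt | hlt
    · refine ⟨i0, j0 - i0, by omega, ?_⟩
      rw [← Function.iterate_add_apply, (by omega : j0 - i0 + i0 = j0)]
      exact hij.symm
    · refine ⟨j0, i0 - j0, by omega, ?_⟩
      rw [← Function.iterate_add_apply, (by omega : i0 - j0 + j0 = i0)]
      exact hij
  set y : PathIn V G := σ^[i] p₀ with hydef
  have hyP : y ∈ P := hiter i
  set O : Set (PathIn V G) := Set.range (fun t : ℕ => σ^[t] y) with hOdef
  have hOy : y ∈ O := ⟨0, rfl⟩
  have hOP : O ⊆ P := by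
    rintro - ⟨t, rfl⟩
    have := hiter (t + i)
    rwa [Function.iterate_add_apply] at this
  have hper : ∀ z ∈ O, σ^[m] z = z := by
    rintro - ⟨t, rfl⟩
    show σ^[m] (σ^[t] y) = σ^[t] y
    rw [← Function.iterate_add_apply, Nat.add_comm, Function.iterate_add_apply, hcyc]
  have hσO : ∀ z ∈ O, σ z ∈ O := by
    rintro - ⟨t, rfl⟩
    exact ⟨t + 1, by simpa using Function.iterate_succ_apply' σ t y⟩
  have hOiter : ∀ z ∈ O, ∀ s : ℕ, σ^[s] z ∈ O := by
    rintro - ⟨t, rfl⟩ s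
    exact ⟨s + t, by simpa using Function.iterate_add_apply σ s t y⟩
  have hinjO : ∀ z ∈ O, ∀ z' ∈ O, σ z = σ z' → z = z' := by
    intro z hz z' hz' he
    have h1 : σ^[m - 1 + 1] z = σ^[m - 1 + 1] z' := by
      rw [Function.iterate_succ_apply, Function.iterate_succ_apply, he]
    rw [(by omega : m - 1 + 1 = m), hper z hz, hper z' hz'] at h1
    exact h1
  have hNex : ∀ r : PathIn V G, ∃ N : PathIn V G, r ∈ P →
      N.a = r.a ∧ N.b = (σ r).b ∧ ∃ L : List V, N.walk.support = r.a :: L ∧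
        (∀ x ∈ L, x ∈ (σ r).walk.support) ∧ (σ r).a ∉ L ∧ vf r ∈ L := by
    intro r
    by_cases hr : r ∈ P
    · obtain ⟨hσP, hσne, hvsupp, hadjv, hvX, hvr⟩ := hF r hr
      have hdp : ((σ r).walk.dropUntil (vf r) hvsupp).IsPath := (σ r).isPath.dropUntil hvsupp
      have hra : r.a ∉ ((σ r).walk.dropUntil (vf r) hvsupp).support := by
        intro hmem
        have h1 : r.a ∈ (σ r).walk.support := (σ r).walk.support_dropUntil_subset hvsupp hmem
        exact hσne (hL.eq_of_mem hσP hr h1 r.walk.start_mem_support)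
      refine ⟨⟨r.a, (σ r).b, Walk.cons hadjv _, hdp.cons hra⟩, fun _ => ?_⟩
      refine ⟨rfl, rfl, ((σ r).walk.dropUntil (vf r) hvsupp).support,
        by simp [Walk.support_cons],
        fun x hx => (σ r).walk.support_dropUntil_subset hvsupp hx, ?_,
        Walk.start_mem_support _⟩
      have hne2 : vf r ≠ (σ r).a := by
        intro h
        apply hvX
        show vf r ∈ X
        rw [h]
        exact (hL.ends _ hσP).1
      exact start_not_mem_dropUntil_support (σ r).isPath hvsupp hne2
    · exact ⟨r, fun h => absurd h hr⟩
  choose Nf hNf using hNex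
  have hsupp : ∀ r ∈ O, ∀ x ∈ (Nf r).walk.support,
      x = r.a ∨ (x ∈ (σ r).walk.support ∧ x ≠ (σ r).a) := by
    intro r hr x hx
    obtain ⟨ha, hb, L, hLs, hLsub, hLa, hLv⟩ := hNf r (hOP hr)
    rw [hLs] at hx
    cases hx with
    | head => exact Or.inl rfl
    | tail _ h' => exact Or.inr ⟨hLsub x h', fun h => hLa (h ▸ h')⟩
  have hmem1 : ∀ r ∈ O, r.a ∈ (Nf r).walk.support ∧ vf r ∈ (Nf r).walk.support := by
    intro r hr
    obtain ⟨ha, hb, L, hLs, hLsub, hLa, hLv⟩ := hNf r (hOP hr)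
    rw [hLs]
    exact ⟨List.mem_cons_self, List.mem_cons_of_mem _ hLv⟩
  set Q : Set (PathIn V G) := Nf '' O ∪ (P \ O) with hQdef
  have hkey : ∀ q₁ ∈ Q, ∀ q₂ ∈ Q,
      (∃ z, z ∈ q₁.walk.support ∧ z ∈ q₂.walk.support) → q₁ = q₂ := by
    rintro q₁ (⟨r, hr, rfl⟩ | ⟨h1P, h1O⟩) q₂ hq2 ⟨z, hz1, hz2⟩
    · rcases hq2 with ⟨r', hr', rfl⟩ | ⟨h2P, h2O⟩
      · rcases hsupp r hr z hz1 with hza | ⟨hzσ, hzne⟩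
        · rcases hsupp r' hr' z hz2 with hza' | ⟨hzσ', hzne'⟩
          · have : r = r' := hL.aInjOn (hOP hr) (hOP hr') (by rw [← hza, hza'])
            rw [this]
          · exfalso
            have hrσ : r = σ r' := hL.eq_of_mem (hOP hr) (hF r' (hOP hr')).1
              (by rw [hza]; exact r.walk.start_mem_support) hzσ'
            exact hzne' (by rw [hza, hrσ])
        · rcases hsupp r' hr' z hz2 with hza' | ⟨hzσ', hzne'⟩
          · exfalso
            have hrσ : r' = σ r := hL.eq_of_mem (hOP hr') (hF r (hOP hr)).1
              (by rw [hza']; exact r'.walk.start_mem_support) hzσ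
            exact hzne (by rw [hza', hrσ])
          · have hσσ : σ r = σ r' :=
              hL.eq_of_mem (hF r (hOP hr)).1 (hF r' (hOP hr')).1 hzσ hzσ'
            rw [hinjO r hr r' hr' hσσ]
      · exfalso
        rcases hsupp r hr z hz1 with hza | ⟨hzσ, hzne⟩
        · have : r = q₂ := hL.eq_of_mem (hOP hr) h2P
            (by rw [hza]; exact r.walk.start_mem_support) hz2
          exact h2O (this ▸ hr)
        · have : σ r = q₂ := hL.eq_of_mem (hF r (hOP hr)).1 h2P hzσ hz2
          exact h2O (this ▸ hσO r hr)
    · rcases hq2 with ⟨r', hr', rfl⟩ | ⟨h2P, h2O⟩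
      · exfalso
        rcases hsupp r' hr' z hz2 with hza | ⟨hzσ, hzne⟩
        · have : q₁ = r' := hL.eq_of_mem h1P (hOP hr') hz1
            (by rw [hza]; exact r'.walk.start_mem_support)
          exact h1O (by rw [this]; exact hr')
        · have : q₁ = σ r' := hL.eq_of_mem h1P (hF r' (hOP hr')).1 hz1 hzσ
          exact h1O (by rw [this]; exact hσO r' hr')
      · exact hL.eq_of_mem h1P h2P hz1 hz2
  have hfin1 : (Nf '' O).Finite := (hL.fin.subset hOP).image Nf
  have hfin2 : (P \ O).Finite := hL.fin.diff
  have hQL : LinkIn G S X Y Q := by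
    constructor
    · exact hfin1.union hfin2
    · have hdisj2 : Disjoint (Nf '' O) (P \ O) := by
        rw [Set.disjoint_left]
        rintro - ⟨r, hr, rfl⟩ ⟨hqP, hqO⟩
        have : Nf r = r := hL.eq_of_mem hqP (hOP hr) (hmem1 r hr).1 r.walk.start_mem_support
        exact hqO (by rw [this]; exact hr)
      have hNinj : Set.InjOn Nf O := by
        intro r hr r' hr' he
        refine hL.aInjOn (hOP hr) (hOP hr') ?_
        rw [← (hNf r (hOP hr)).1, he, (hNf r' (hOP hr')).1]
      rw [hQdef, Set.ncard_union_eq hdisj2 hfin1 hfin2, Set.ncard_image_of_injOn hNinj,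
        Nat.add_comm, Set.ncard_diff_add_ncard_of_subset hOP hL.fin]
      exact hL.cardPX
    · exact hL.cardXY
    · rintro q (⟨r, hr, rfl⟩ | ⟨hqP, -⟩)
      · constructor
        · rw [(hNf r (hOP hr)).1]; exact (hL.ends r (hOP hr)).1
        · rw [(hNf r (hOP hr)).2.1]; exact (hL.ends _ (hF r (hOP hr)).1).2
      · exact hL.ends q hqP
    · intro q₁ h1 q₂ h2 hne12 z hz1 hz2
      exact hne12 (hkey q₁ h1 q₂ h2 ⟨z, hz1, hz2⟩)
    · rintro q (⟨r, hr, rfl⟩ | ⟨hqP, -⟩) z hz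
      · rcases hsupp r hr z hz with hza | ⟨hzσ, -⟩
        · rw [hza]; exact hL.sub r (hOP hr) r.a r.walk.start_mem_support
        · exact hL.sub _ (hF r (hOP hr)).1 z hzσ
      · exact hL.sub q hqP z hz
  have hQP := hS.uniq Q hQL
  have hNyQ : Nf y ∈ Q := Or.inl ⟨y, hOy, rfl⟩
  have hNyP : Nf y ∈ P := hQP ▸ hNyQ
  have hNy : Nf y = y := hL.eq_of_mem hNyP hyP (hmem1 y hOy).1 y.walk.start_mem_support
  have hbeq : y.b = (σ y).b := by rw [← (hNf y hyP).2.1, hNy]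
  have hσy : σ y = y := by
    refine hL.eq_of_mem (hF y hyP).1 hyP (σ y).walk.end_mem_support ?_
    rw [← hbeq]
    exact y.walk.end_mem_support
  exact (hF y hyP).2.1 hσy

theorem chord {S X Y : Set V} {P : Set (PathIn V G)}
    (hS : SingIn G S X Y P) {p : PathIn V G} (hp : p ∈ P) {x' : V}
    (hadj : G.Adj p.a x') (w : G.Walk x' p.b) (hw : p.walk = Walk.cons hadj w)
    {v : V} (hv : G.Adj p.a v) (hvs : v ∈ p.walk.support) : v = x' := by
  classical
  have hL := hS.link
  have hxv : p.a ≠ v := G.ne_of_adj hv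
  have hvw : v ∈ w.support := by
    rw [hw, Walk.support_cons] at hvs
    cases hvs with
    | head => exact absurd rfl hxv
    | tail _ h' => exact h'
  by_contra hne
  have hpath := p.isPath
  rw [hw, Walk.cons_isPath_iff] at hpath
  obtain ⟨hwpath, hxw⟩ := hpath
  have hdp : (w.dropUntil v hvw).IsPath := hwpath.dropUntil hvw
  have hxd : p.a ∉ (w.dropUntil v hvw).support :=
    fun hmem => hxw (w.support_dropUntil_subset hvw hmem)
  set N : PathIn V G := ⟨p.a, p.b, Walk.cons hv (w.dropUntil v hvw), hdp.cons hxd⟩ with hN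
  have hNsupp : ∀ z ∈ N.walk.support, z ∈ p.walk.support := by
    intro z hz
    rw [hw, Walk.support_cons]
    rw [hN] at hz
    simp only [Walk.support_cons] at hz
    cases hz with
    | head => exact List.mem_cons_self
    | tail _ h' => exact List.mem_cons_of_mem _ (w.support_dropUntil_subset hvw h')
  have hNnotin : N ∉ P \ {p} := by
    rintro ⟨hNP, hNp⟩
    refine hNp ?_
    have : N = p := hL.eq_of_mem hNP hp (N.walk.start_mem_support) p.walk.start_mem_support
    simp [this]
  have hQ : LinkIn G S X Y (insert N (P \ {p})) := by
    constructor
    · exact (hL.fin.diff (t := {p})).insert N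
    · rw [Set.ncard_insert_of_notMem hNnotin (hL.fin.diff),
        Set.ncard_diff_singleton_add_one hp hL.fin]
      exact hL.cardPX
    · exact hL.cardXY
    · rintro q (rfl | ⟨hqP, -⟩)
      · exact hL.ends p hp
      · exact hL.ends q hqP
    · rintro q hq r hr hqr z hzq
      rcases hq with rfl | ⟨hqP, hqne⟩
      · rcases hr with rfl | ⟨hrP, hrne⟩
        · exact absurd rfl hqr
        · intro hzr
          exact hL.disj p hp r hrP (fun h => hrne (by simp [h.symm])) z (hNsupp z hzq) hzr
      · rcases hr with rfl | ⟨hrP, hrne⟩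
        · intro hzr
          exact hL.disj q hqP p hp (fun h => hqne (by simp [h])) z hzq (hNsupp z hzr)
        · exact hL.disj q hqP r hrP hqr z hzq
    · rintro q (rfl | ⟨hqP, -⟩) z hz
      · exact hL.sub p hp z (hNsupp z hz)
      · exact hL.sub q hqP z hz
  have hQP := hS.uniq _ hQ
  have hNP : N ∈ P := hQP ▸ Set.mem_insert N _
  have hNp : N = p := hL.eq_of_mem hNP hp (N.walk.start_mem_support) p.walk.start_mem_support
  have hsup := congrArg (fun r : PathIn V G => r.walk.support) hNp
  rw [hN] at hsup
  simp only [Walk.support_cons] at hsup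
  rw [hw, Walk.support_cons] at hsup
  have h2 : (w.dropUntil v hvw).support = w.support := by
    exact (List.cons.injEq _ _ _ _ ▸ hsup).2
  rw [(w.dropUntil v hvw).support_eq_cons, w.support_eq_cons] at h2
  exact hne (List.cons.injEq _ _ _ _ ▸ h2).1

theorem aux (n : ℕ) : ∀ (S X Y : Set V) (P : Set (PathIn V G)), S.ncard ≤ n →
    SingIn G S X Y P →
    ∃ (m : ℕ) (bag : Fin (m + 1) → Set V),
      (∀ v ∈ S, ∃ i, v ∈ bag i) ∧
      (∀ u v : V, u ∈ S → v ∈ S → G.Adj u v → ∃ i, u ∈ bag i ∧ v ∈ bag i) ∧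
      (∀ i j k : Fin (m + 1), i ≤ j → j ≤ k → bag i ∩ bag k ⊆ bag j) ∧
      (∀ i, (bag i).ncard ≤ P.ncard + 1) ∧ X ⊆ bag 0 ∧ (∀ i, bag i ⊆ S) := by
  classical
  induction n with
  | zero =>
    intro S X Y P hcard hS
    have hSempty : S = ∅ :=
      (Set.ncard_eq_zero (Set.toFinite S)).mp (Nat.le_antisymm hcard (Nat.zero_le _))
    have hXempty : X = ∅ := by
      rw [← Set.subset_empty_iff, ← hSempty]
      exact hS.link.X_sub
    refine ⟨0, fun _ => ∅, ?_, ?_, ?_, ?_, ?_, ?_⟩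
    · intro v hv; rw [hSempty] at hv; exact absurd hv (Set.notMem_empty v)
    · intro u v hu _ _; rw [hSempty] at hu; exact absurd hu (Set.notMem_empty u)
    · intro i j k _ _ z hz; exact hz.1
    · intro i; simp
    · rw [hXempty]
    · intro i; simp
  | succ n ih =>
    intro S X Y P hcard hS
    have hL := hS.link
    rcases P.eq_empty_or_nonempty with hP0 | hPne
    · have hX0 : X = ∅ := by
        have h1 := hL.cardPX
        rw [hP0, Set.ncard_empty] at h1
        exact (Set.ncard_eq_zero (Set.toFinite X)).mp h1.symm
      refine ⟨0, fun _ => ∅, ?_, ?_, ?_, ?_, ?_, ?_⟩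
      · intro v hv
        obtain ⟨p, hp, -⟩ := hS.cover v hv
        rw [hP0] at hp
        exact absurd hp (Set.notMem_empty p)
      · intro u v hu _ _
        obtain ⟨p, hp, -⟩ := hS.cover u hu
        rw [hP0] at hp
        exact absurd hp (Set.notMem_empty p)
      · intro i j k _ _ z hz; exact hz.1
      · intro i; simp
      · rw [hX0]
      · intro i; simp
    · obtain ⟨p, hp, hgood⟩ := exists_good hS hPne
      have hxX : p.a ∈ X := (hL.ends p hp).1
      have hxS : p.a ∈ S := hL.sub p hp p.a p.walk.start_mem_support
      have hponly : ∀ q ∈ P, p.a ∈ q.walk.support → q = p := fun q hq hmem =>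
        hL.eq_of_mem hq hp hmem p.walk.start_mem_support
      have e1 : (P \ {p}).ncard + 1 = P.ncard := Set.ncard_diff_singleton_add_one hp hL.fin
      have e2 : (X \ {p.a}).ncard + 1 = X.ncard :=
        Set.ncard_diff_singleton_add_one hxX (Set.toFinite X)
      have hScard : (S \ {p.a}).ncard ≤ n := by
        have := Set.ncard_diff_singleton_add_one hxS (Set.toFinite S)
        omega
      have hqsne : ∀ q ∈ P \ {p}, ∀ z ∈ q.walk.support, z ≠ p.a := by
        rintro q ⟨hqP, hqne⟩ z hz rfl
        exact hqne (hponly q hqP hz)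
      by_cases hnil : p.walk.Nil
      · -- `p` is a single vertex; delete it entirely.
        have hab : p.a = p.b := hnil.eq
        have hsupp1 : p.walk.support = [p.a] := Walk.nil_iff_support_eq.mp hnil
        have hyY : p.a ∈ Y := by rw [hab]; exact (hL.ends p hp).2
        have e3 : (Y \ {p.a}).ncard + 1 = Y.ncard :=
          Set.ncard_diff_singleton_add_one hyY (Set.toFinite Y)
        have hS' : SingIn G (S \ {p.a}) (X \ {p.a}) (Y \ {p.a}) (P \ {p}) := by
          refine ⟨⟨hL.fin.diff, ?_, ?_, ?_, ?_, ?_⟩, ?_, ?_⟩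
          · have := hL.cardPX; omega
          · have := hL.cardXY; omega
          · rintro q ⟨hqP, hqne⟩
            refine ⟨⟨(hL.ends q hqP).1, ?_⟩, ⟨(hL.ends q hqP).2, ?_⟩⟩
            · simpa using hqsne q ⟨hqP, hqne⟩ q.a q.walk.start_mem_support
            · simpa using hqsne q ⟨hqP, hqne⟩ q.b q.walk.end_mem_support
          · rintro q hq r hr hne z hz
            exact hL.disj q hq.1 r hr.1 hne z hz
          · rintro q hq z hz
            exact ⟨hL.sub q hq.1 z hz, by simpa using hqsne q hq z hz⟩
          · rintro v ⟨hvS, hvne⟩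
            obtain ⟨q, hqP, hvq⟩ := hS.cover v hvS
            have hqp : q ≠ p := by
              rintro rfl
              rw [hsupp1] at hvq
              simp only [List.mem_singleton] at hvq
              exact hvne (by simp [hvq])
            exact ⟨q, ⟨hqP, hqp⟩, hvq⟩
          · intro Q' hQ'
            have hpnot : p ∉ Q' := fun hmem =>
              (hQ'.sub p hmem p.a p.walk.start_mem_support).2 rfl
            have hQL2 : LinkIn G S X Y (insert p Q') := by
              refine ⟨hQ'.fin.insert p, ?_, hL.cardXY, ?_, ?_, ?_⟩
              · rw [Set.ncard_insert_of_notMem hpnot hQ'.fin]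
                have := hQ'.cardPX
                omega
              · rintro q (hq0 | hq)
                · rw [hq0]
                  exact ⟨hxX, (hL.ends p hp).2⟩
                · exact ⟨(hQ'.ends q hq).1.1, (hQ'.ends q hq).2.1⟩
              · rintro q (hq0 | hq) r (hr0 | hr) hne z hz
                · exact absurd (hq0.trans hr0.symm) hne
                · rw [hq0] at hz
                  intro hzr
                  rw [hsupp1] at hz
                  simp only [List.mem_singleton] at hz
                  exact (hQ'.sub r hr z hzr).2 (by simp [hz])
                · intro hzr
                  rw [hr0] at hzr
                  rw [hsupp1] at hzr
                  simp only [List.mem_singleton] at hzr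
                  exact (hQ'.sub q hq z hz).2 (by simp [hzr])
                · exact hQ'.disj q hq r hr hne z hz
              · rintro q (hq0 | hq) z hz
                · rw [hq0] at hz
                  rw [hsupp1] at hz
                  simp only [List.mem_singleton] at hz
                  rw [hz]
                  exact hxS
                · exact (hQ'.sub q hq z hz).1
            have hins := hS.uniq _ hQL2
            calc Q' = insert p Q' \ {p} := (Set.insert_diff_self_of_notMem hpnot).symm
              _ = P \ {p} := by rw [hins]
        obtain ⟨m, B, hBc, hBe, hBi, hBsz, hBX, hBS⟩ := ih (S \ {p.a}) (X \ {p.a})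
          (Y \ {p.a}) (P \ {p}) hScard hS'
        refine ⟨m + 1, Fin.cases X B, ?_, ?_, ?_, ?_, ?_, ?_⟩
        · intro v hv
          by_cases hvp : v = p.a
          · exact ⟨0, by rw [hvp]; simpa using hxX⟩
          · obtain ⟨i, hi⟩ := hBc v ⟨hv, by simp [hvp]⟩
            exact ⟨i.succ, by simpa using hi⟩
        · intro u v hu hv hadj2
          by_cases hup : u = p.a
          · rcases hgood v hv (by rw [← hup]; exact hadj2) with hvX | hvsupp
            · exact ⟨0, by simp [hup, hxX, hvX]⟩
            · exfalso
              rw [hsupp1] at hvsupp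
              simp only [List.mem_singleton] at hvsupp
              exact G.ne_of_adj hadj2 (by rw [hup, hvsupp])
          · by_cases hvp : v = p.a
            · rcases hgood u hu (by rw [← hvp]; exact hadj2.symm) with huX | husupp
              · exact ⟨0, by simp [hvp, hxX, huX]⟩
              · exfalso
                rw [hsupp1] at husupp
                simp only [List.mem_singleton] at husupp
                exact G.ne_of_adj hadj2 (by rw [hvp, husupp])
            · obtain ⟨i, hiu, hiv⟩ := hBe u v ⟨hu, by simp [hup]⟩ ⟨hv, by simp [hvp]⟩ hadj2
              exact ⟨i.succ, by simpa using ⟨hiu, hiv⟩⟩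
        · intro i j k hij hjk
          rcases Fin.eq_zero_or_eq_succ j with rfl | ⟨j0, rfl⟩
          · have hi0 : i = 0 := Fin.le_zero_iff.mp hij
            subst hi0
            intro z hz
            exact hz.1
          · rcases Fin.eq_zero_or_eq_succ k with rfl | ⟨k0, rfl⟩
            · exact absurd (Fin.le_zero_iff.mp hjk) (Fin.succ_ne_zero j0)
            · have hjk' : j0 ≤ k0 := by rwa [Fin.succ_le_succ_iff] at hjk
              rcases Fin.eq_zero_or_eq_succ i with rfl | ⟨i0, rfl⟩
              · intro z hz
                simp only [Fin.cases_zero, Fin.cases_succ] at hz ⊢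
                have hzS' : z ∈ S \ {p.a} := hBS k0 hz.2
                exact hBi 0 j0 k0 (Fin.zero_le _) hjk' ⟨hBX ⟨hz.1, hzS'.2⟩, hz.2⟩
              · have hij' : i0 ≤ j0 := by rwa [Fin.succ_le_succ_iff] at hij
                intro z hz
                simp only [Fin.cases_succ] at hz ⊢
                exact hBi i0 j0 k0 hij' hjk' hz
        · intro i
          rcases Fin.eq_zero_or_eq_succ i with rfl | ⟨i0, rfl⟩
          · simp only [Fin.cases_zero]
            have := hL.cardPX
            omega
          · simp only [Fin.cases_succ]
            have := hBsz i0
            omega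
        · intro z hz
          simpa using hz
        · intro i
          rcases Fin.eq_zero_or_eq_succ i with rfl | ⟨i0, rfl⟩
          · simpa using hL.X_sub
          · simp only [Fin.cases_succ]
            exact fun z hz => (hBS i0 hz).1
      · -- `p` has at least one edge; remove its first vertex.
        obtain ⟨x', hadj, w, hpweq⟩ := Walk.not_nil_iff.mp hnil
        have hpath := p.isPath
        rw [hpweq, Walk.cons_isPath_iff] at hpath
        obtain ⟨hwpath, hxw⟩ := hpath
        have hx'nep : x' ≠ p.a := (G.ne_of_adj hadj).symm
        have hsuppcons : p.walk.support = p.a :: w.support := by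
          rw [hpweq, Walk.support_cons]
        have hx'supp : x' ∈ p.walk.support := by
          rw [hsuppcons]
          exact List.mem_cons_of_mem _ w.start_mem_support
        have hx'X : x' ∉ X := by
          intro hmem
          rw [hL.X_eq] at hmem
          obtain ⟨q, hq, hqa⟩ := hmem
          have hq'p : q = p := hL.eq_of_mem hq hp
            (by rw [← hqa] at hx'supp ⊢; exact q.walk.start_mem_support) hx'supp
          exact hx'nep (by rw [← hqa, hq'p])
        have hx'S : x' ∈ S := hL.sub p hp x' hx'supp
        set p' : PathIn V G := ⟨x', p.b, w, hwpath⟩ with hp'def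
        have hp'nP : p' ∉ P \ {p} := by
          rintro ⟨hP', hne'⟩
          exact hne' (hL.eq_of_mem hP' hp w.start_mem_support hx'supp)
        have hx'nX : x' ∉ X \ {p.a} := fun h => hx'X h.1
        have hX'card : (insert x' (X \ {p.a})).ncard = X.ncard := by
          rw [Set.ncard_insert_of_notMem hx'nX (Set.toFinite _)]
          omega
        have hP'card : (insert p' (P \ {p})).ncard = P.ncard := by
          rw [Set.ncard_insert_of_notMem hp'nP (hL.fin.diff)]
          omega
        have hS' : SingIn G (S \ {p.a}) (insert x' (X \ {p.a})) Y (insert p' (P \ {p})) := by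
          refine ⟨⟨(hL.fin.diff).insert p', ?_, ?_, ?_, ?_, ?_⟩, ?_, ?_⟩
          · rw [hP'card, hX'card]
            exact hL.cardPX
          · rw [hX'card]
            exact hL.cardXY
          · rintro q (rfl | ⟨hqP, hqne⟩)
            · exact ⟨Set.mem_insert _ _, (hL.ends p hp).2⟩
            · refine ⟨Set.mem_insert_of_mem _ ⟨(hL.ends q hqP).1, ?_⟩, (hL.ends q hqP).2⟩
              simpa using hqsne q ⟨hqP, hqne⟩ q.a q.walk.start_mem_support
          · rintro q (rfl | ⟨hqP, hqne1⟩) r (rfl | ⟨hrP, hrne1⟩) hne z hz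
            · exact absurd rfl hne
            · intro hzr
              have hzp : z ∈ p.walk.support := by
                rw [hsuppcons]
                exact List.mem_cons_of_mem _ hz
              exact hL.disj p hp r hrP (fun h => hrne1 (by simp [h.symm])) z hzp hzr
            · intro hzr
              have hzp : z ∈ p.walk.support := by
                rw [hsuppcons]
                exact List.mem_cons_of_mem _ hzr
              exact hL.disj q hqP p hp (fun h => hqne1 (by simp [h])) z hz hzp
            · exact hL.disj q hqP r hrP hne z hz
          · rintro q (rfl | ⟨hqP, hqne1⟩) z hz
            · refine ⟨hL.sub p hp z (by rw [hsuppcons]; exact List.mem_cons_of_mem _ hz), ?_⟩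
              simp only [Set.mem_singleton_iff]
              rintro rfl
              exact hxw hz
            · exact ⟨hL.sub q hqP z hz, by simpa using hqsne q ⟨hqP, hqne1⟩ z hz⟩
          · rintro v ⟨hvS, hvne⟩
            obtain ⟨q, hqP, hvq⟩ := hS.cover v hvS
            by_cases hqp : q = p
            · subst hqp
              rw [hsuppcons] at hvq
              cases hvq with
              | head => exact absurd rfl hvne
              | tail _ h' => exact ⟨p', Set.mem_insert _ _, h'⟩
            · exact ⟨q, Set.mem_insert_of_mem _ ⟨hqP, hqp⟩, hvq⟩
          · intro Q' hQ'
            have hx'X' : x' ∈ insert x' (X \ {p.a}) := Set.mem_insert _ _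
            obtain ⟨q', hq'Q, hq'a⟩ : ∃ q' ∈ Q', q'.a = x' := by
              rw [hQ'.X_eq] at hx'X'
              obtain ⟨q', hmem, ha⟩ := hx'X'
              exact ⟨q', hmem, ha⟩
            have hxnot : ∀ r ∈ Q', p.a ∉ r.walk.support := fun r hr hmem =>
              (hQ'.sub r hr _ hmem).2 rfl
            have hwqpath : (q'.walk.copy hq'a rfl).IsPath :=
              (Walk.isPath_copy _ _ _).mpr q'.isPath
            have hEpath : (Walk.cons hadj (q'.walk.copy hq'a rfl)).IsPath := by
              refine hwqpath.cons ?_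
              rw [Walk.support_copy]
              exact hxnot q' hq'Q
            set E : PathIn V G := ⟨p.a, q'.b, Walk.cons hadj (q'.walk.copy hq'a rfl), hEpath⟩
              with hEdef
            have hEsupp : E.walk.support = p.a :: q'.walk.support := by
              rw [hEdef]
              simp [Walk.support_cons, Walk.support_copy]
            have hEnot : E ∉ Q' \ {q'} := by
              rintro ⟨hmem, -⟩
              exact hxnot E hmem (by rw [hEsupp]; exact List.mem_cons_self)
            have hQL2 : LinkIn G S X Y (insert E (Q' \ {q'})) := by
              refine ⟨(hQ'.fin.diff).insert E, ?_, hL.cardXY, ?_, ?_, ?_⟩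
              · rw [Set.ncard_insert_of_notMem hEnot (hQ'.fin.diff)]
                have h4 := Set.ncard_diff_singleton_add_one hq'Q hQ'.fin
                have h5 := hQ'.cardPX
                rw [hX'card] at h5
                omega
              · rintro q (rfl | ⟨hqQ, hqne1⟩)
                · exact ⟨hxX, (hQ'.ends q' hq'Q).2⟩
                · have haX' := (hQ'.ends q hqQ).1
                  rcases haX' with h6 | h6
                  · exfalso
                    refine hqne1 ?_
                    simp only [Set.mem_singleton_iff]
                    refine hQ'.aInjOn hqQ hq'Q ?_
                    rw [hq'a]
                    exact h6
                  · exact ⟨h6.1, (hQ'.ends q hqQ).2⟩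
              · rintro q (rfl | ⟨hqQ, hqne1⟩) r (rfl | ⟨hrQ, hrne1⟩) hne z hz
                · exact absurd rfl hne
                · rw [hEsupp] at hz
                  intro hzr
                  cases hz with
                  | head => exact hxnot r hrQ hzr
                  | tail _ h' =>
                    exact hQ'.disj q' hq'Q r hrQ (fun h => hrne1 (by simp [h.symm])) z h' hzr
                · intro hzr
                  rw [hEsupp] at hzr
                  cases hzr with
                  | head => exact hxnot q hqQ hz
                  | tail _ h' =>
                    exact hQ'.disj q hqQ q' hq'Q (fun h => hqne1 (by simp [h])) z hz h'
                · exact hQ'.disj q hqQ r hrQ hne z hz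
              · rintro q (rfl | ⟨hqQ, -⟩) z hz
                · rw [hEsupp] at hz
                  cases hz with
                  | head => exact hxS
                  | tail _ h' => exact (hQ'.sub q' hq'Q z h').1
                · exact (hQ'.sub q hqQ z hz).1
            have hins := hS.uniq _ hQL2
            have hEP : E ∈ P := by rw [← hins]; exact Set.mem_insert _ _
            have hEp : E = p := hL.eq_of_mem hEP hp
              (by rw [hEsupp]; exact List.mem_cons_self) p.walk.start_mem_support
            have hbq : q'.b = p.b := by
              rw [← hEp]
            have hsupeq : E.walk.support = p.walk.support :=
              congrArg (fun r : PathIn V G => r.walk.support) hEp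
            rw [hEsupp, hsuppcons] at hsupeq
            have hq'w : q'.walk.support = w.support := (List.cons.injEq _ _ _ _ ▸ hsupeq).2
            have hq'p' : q' = p' := by
              refine PathIn.ext' (by rw [hq'a]) hbq ?_
              rw [hq'w]
            have h6 : Q' \ {q'} = P \ {p} := by
              calc Q' \ {q'} = insert E (Q' \ {q'}) \ {E} :=
                    (Set.insert_diff_self_of_notMem hEnot).symm
                _ = P \ {p} := by rw [hins, hEp]
            calc Q' = insert q' (Q' \ {q'}) := by
                  rw [Set.insert_diff_singleton, Set.insert_eq_self.mpr hq'Q]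
              _ = insert p' (P \ {p}) := by rw [h6, hq'p']
        obtain ⟨m, B, hBc, hBe, hBi, hBsz, hBX, hBS⟩ := ih (S \ {p.a})
          (insert x' (X \ {p.a})) Y (insert p' (P \ {p})) hScard hS'
        refine ⟨m + 1, Fin.cases (insert x' X) B, ?_, ?_, ?_, ?_, ?_, ?_⟩
        · intro v hv
          by_cases hvp : v = p.a
          · refine ⟨0, ?_⟩
            rw [hvp]
            simpa using Or.inr hxX
          · obtain ⟨i, hi⟩ := hBc v ⟨hv, by simp [hvp]⟩
            exact ⟨i.succ, by simpa using hi⟩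
        · intro u v hu hv hadj2
          by_cases hup : u = p.a
          · rcases hgood v hv (by rw [← hup]; exact hadj2) with hvX | hvsupp
            · exact ⟨0, by simp [hup, hxX, hvX]⟩
            · have hvx' : v = x' := chord hS hp hadj w hpweq (by rw [← hup]; exact hadj2) hvsupp
              exact ⟨0, by simp [hup, hxX, hvx']⟩
          · by_cases hvp : v = p.a
            · rcases hgood u hu (by rw [← hvp]; exact hadj2.symm) with huX | husupp
              · exact ⟨0, by simp [hvp, hxX, huX]⟩
              · have hux' : u = x' :=
                  chord hS hp hadj w hpweq (by rw [← hvp]; exact hadj2.symm) husupp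
                exact ⟨0, by simp [hvp, hxX, hux']⟩
            · obtain ⟨i, hiu, hiv⟩ := hBe u v ⟨hu, by simp [hup]⟩ ⟨hv, by simp [hvp]⟩ hadj2
              exact ⟨i.succ, by simpa using ⟨hiu, hiv⟩⟩
        · intro i j k hij hjk
          rcases Fin.eq_zero_or_eq_succ j with rfl | ⟨j0, rfl⟩
          · have hi0 : i = 0 := Fin.le_zero_iff.mp hij
            subst hi0
            intro z hz
            exact hz.1
          · rcases Fin.eq_zero_or_eq_succ k with rfl | ⟨k0, rfl⟩
            · exact absurd (Fin.le_zero_iff.mp hjk) (Fin.succ_ne_zero j0)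
            · have hjk' : j0 ≤ k0 := by rwa [Fin.succ_le_succ_iff] at hjk
              rcases Fin.eq_zero_or_eq_succ i with rfl | ⟨i0, rfl⟩
              · intro z hz
                simp only [Fin.cases_zero, Fin.cases_succ] at hz ⊢
                have hzS' : z ∈ S \ {p.a} := hBS k0 hz.2
                have hzX' : z ∈ insert x' (X \ {p.a}) := by
                  rcases hz.1 with rfl | hzX
                  · exact Set.mem_insert _ _
                  · exact Set.mem_insert_of_mem _ ⟨hzX, hzS'.2⟩
                exact hBi 0 j0 k0 (Fin.zero_le _) hjk' ⟨hBX hzX', hz.2⟩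
              · have hij' : i0 ≤ j0 := by rwa [Fin.succ_le_succ_iff] at hij
                intro z hz
                simp only [Fin.cases_succ] at hz ⊢
                exact hBi i0 j0 k0 hij' hjk' hz
        · intro i
          rcases Fin.eq_zero_or_eq_succ i with rfl | ⟨i0, rfl⟩
          · simp only [Fin.cases_zero]
            have h7 := Set.ncard_insert_le x' X
            have := hL.cardPX
            omega
          · simp only [Fin.cases_succ]
            have := hBsz i0
            rw [hP'card] at this
            omega
        · intro z hz
          simpa using Or.inr hz
        · intro i
          rcases Fin.eq_zero_or_eq_succ i with rfl | ⟨i0, rfl⟩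
          · simp only [Fin.cases_zero]
            rintro z (rfl | hzX)
            · exact hx'S
            · exact hL.X_sub hzX
          · simp only [Fin.cases_succ]
            exact fun z hz => (hBS i0 hz).1

end Main

/-- Let `G` be a graph of path-width at most `k` whose vertices are covered
by the `d` pairwise disjoint paths of a singular `X`–`Y` linkage `P`.  Then `G` admits a
path-decomposition `(X_0, …, X_n)` of width at most `d` whose first bag contains `X`. -/
theorem stmt_11 {V : Type} [Fintype V] (G : SimpleGraph V) (X Y : Set V)
    (k d : ℕ) (hpw : PathwidthAtMost G k)
    (P : Set (PathIn V G)) (hd : P.ncard = d)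
    (hP : IsSingularLinkage G X Y P) :
    ∃ (n : ℕ) (bag : Fin (n + 1) → Set V),
      IsPathDecomp G (n + 1) bag ∧ (∀ i, (bag i).ncard ≤ d + 1) ∧ X ⊆ bag 0 := by
  obtain ⟨⟨hfin, hPX, hXY, hends, hdisj⟩, hcov, huniq⟩ := hP
  have hSing : SingIn G Set.univ X Y P := by
    refine ⟨⟨hfin, hPX, hXY, hends, hdisj, fun _ _ _ _ => Set.mem_univ _⟩,
      fun v _ => hcov v, fun Q hQ => huniq Q ⟨hQ.fin, hQ.cardPX, hQ.cardXY, hQ.ends, hQ.disj⟩⟩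
  obtain ⟨m, bag, hc, he, hi, hsz, hX0, -⟩ :=
    aux (Set.univ : Set V).ncard Set.univ X Y P le_rfl hSing
  refine ⟨m, bag, ⟨fun v => hc v (Set.mem_univ v),
    fun u v huv => he u v (Set.mem_univ u) (Set.mem_univ v) huv, hi⟩, fun i => hd ▸ hsz i, hX0⟩
end

section
/- Let (V_t)_{t∈T} be a tree-decomposition of a graph G_0^+ and, for each vortex V_i with society (w_1^i,…,w_{n(i)}^i), let (X_1^i,…,X_{n(i)}^i) be a path-decomposition of V_i with w_j^i ∈ X_j^i, where G_0^+ contains the path w_j^i w_{j+1}^i … w_k^i between any two society vertices of V_i and the vortices are pairwise vertex-disjoint outside G_0^+. Then defining V't := V_t ∪ ⋃{X_j^i : w_j^i ∈ V_t} yields a tree-decomposition (V't)_{t∈T} of G_0^+ ∪ ⋃_i V_i. -/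
/-!
A vertex `v` of a vortex `V_i` lies in `V'_t` exactly when `V_t` contains some `w_j^i` with
`v ∈ X_j^i`: since `V_i` meets `G₀⁺` only in its society and the vortices are disjoint, no other
bag can contribute `v`. The indices `j` with `v ∈ X_j^i` form an interval, the subtrees of
consecutive society vertices meet because `w_j^i w_{j+1}^i` is an edge of `G₀⁺`, and a union of
subtrees of a tree in which consecutive ones meet is again a subtree.
-/

/-- `(T, bag)` is a tree-decomposition of the portion of `G` induced on the vertex set `S`. -/
def IsTreeDecompOn {V ι : Type} (G : SimpleGraph V) (S : Set V)
    (T : SimpleGraph ι) (bag : ι → Set V) : Prop :=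
  T.Connected ∧ T.IsAcyclic ∧
  (∀ t, bag t ⊆ S) ∧
  (∀ v ∈ S, ∃ t, v ∈ bag t) ∧
  (∀ u v : V, G.Adj u v → u ∈ S → v ∈ S → ∃ t, u ∈ bag t ∧ v ∈ bag t) ∧
  (∀ (v : V) (t₁ t₂ : ι), v ∈ bag t₁ → v ∈ bag t₂ →
    ∀ p : T.Walk t₁ t₂, p.IsPath → ∀ t ∈ p.support, v ∈ bag t)

namespace SimpleGraph

variable {ι : Type*} {G : SimpleGraph ι} {s s' : Set ι}

/-- In a tree these are exactly the vertex sets of subtrees. -/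
def IsPathConvex (G : SimpleGraph ι) (s : Set ι) : Prop :=
  ∀ ⦃t₁ t₂⦄, t₁ ∈ s → t₂ ∈ s → ∀ p : G.Walk t₁ t₂, p.IsPath → ∀ t ∈ p.support, t ∈ s

lemma IsAcyclic.support_subset_of_isPath (hG : G.IsAcyclic) {u v : ι} {p : G.Walk u v}
    (hp : p.IsPath) (q : G.Walk u v) : p.support ⊆ q.support := by
  classical
  have hpq : p = q.bypass := congrArg Subtype.val
    ((hG.subsingleton_path u v).elim ⟨p, hp⟩ ⟨q.bypass, q.bypass_isPath⟩)
  exact hpq ▸ q.support_bypass_subset_support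

lemma IsAcyclic.isPathConvex_of_exists_walk (hG : G.IsAcyclic)
    (h : ∀ ⦃t₁ t₂⦄, t₁ ∈ s → t₂ ∈ s → ∃ q : G.Walk t₁ t₂, ∀ t ∈ q.support, t ∈ s) :
    G.IsPathConvex s := fun _ _ ht₁ ht₂ p hp t ht ↦ by
  obtain ⟨q, hq⟩ := h ht₁ ht₂
  exact hq t (hG.support_subset_of_isPath hp q ht)

lemma IsPathConvex.exists_walk (hs : G.IsPathConvex s) (hG : G.Preconnected) {t₁ t₂ : ι}
    (ht₁ : t₁ ∈ s) (ht₂ : t₂ ∈ s) : ∃ q : G.Walk t₁ t₂, ∀ t ∈ q.support, t ∈ s := by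
  classical
  exact ⟨(hG t₁ t₂).some.bypass, hs ht₁ ht₂ _ (Walk.bypass_isPath _)⟩

lemma IsPathConvex.union (hs : G.IsPathConvex s) (hs' : G.IsPathConvex s')
    (hG : G.IsAcyclic) (hG' : G.Preconnected) (hss' : (s ∩ s').Nonempty) :
    G.IsPathConvex (s ∪ s') := by
  obtain ⟨r, hrs, hrs'⟩ := hss'
  have walk_to_r : ∀ x ∈ s ∪ s', ∃ q : G.Walk x r, ∀ t ∈ q.support, t ∈ s ∪ s' := by
    rintro x (hx | hx)
    · obtain ⟨q, hq⟩ := hs.exists_walk hG' hx hrs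
      exact ⟨q, fun t ht ↦ Or.inl (hq t ht)⟩
    · obtain ⟨q, hq⟩ := hs'.exists_walk hG' hx hrs'
      exact ⟨q, fun t ht ↦ Or.inr (hq t ht)⟩
  refine hG.isPathConvex_of_exists_walk fun t₁ t₂ ht₁ ht₂ ↦ ?_
  obtain ⟨q₁, hq₁⟩ := walk_to_r t₁ ht₁
  obtain ⟨q₂, hq₂⟩ := walk_to_r t₂ ht₂
  refine ⟨q₁.append q₂.reverse, fun t ht ↦ ?_⟩
  rw [Walk.mem_support_append_iff, Walk.support_reverse, List.mem_reverse] at ht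
  exact ht.elim (hq₁ t) (hq₂ t)

section Chain

variable {κ : Type*} [LinearOrder κ] [SuccOrder κ] [IsSuccArchimedean κ] {f : κ → Set ι}

lemma isPathConvex_biUnion_Icc (hG : G.IsAcyclic) (hG' : G.Preconnected)
    (hf : ∀ k, G.IsPathConvex (f k)) (hchain : ∀ j k, j ⋖ k → (f j ∩ f k).Nonempty)
    {a b : κ} (hab : a ≤ b) : G.IsPathConvex (⋃ k ∈ Set.Icc a b, f k) := by
  induction hab using Succ.rec with
  | rfl => simpa using hf a
  | succ b hab ih =>
    by_cases hb : IsMax b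
    · rwa [Order.succ_eq_iff_isMax.2 hb]
    rw [Order.Icc_succ_right (hab.trans (Order.le_succ b)), Set.biUnion_insert]
    obtain ⟨t, htb, htb'⟩ := hchain _ _ (Order.covBy_succ_of_not_isMax hb)
    exact (hf _).union ih hG hG' ⟨t, htb', Set.mem_biUnion ⟨hab, le_rfl⟩ htb⟩

lemma isPathConvex_biUnion_of_ordConnected (hG : G.IsAcyclic) (hG' : G.Preconnected)
    (hf : ∀ k, G.IsPathConvex (f k)) (hchain : ∀ j k, j ⋖ k → (f j ∩ f k).Nonempty)
    {J : Set κ} (hJ : J.OrdConnected) : G.IsPathConvex (⋃ k ∈ J, f k) := by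
  have key : ∀ a ∈ J, ∀ b ∈ J, a ≤ b → ∀ ⦃t₁ t₂⦄, t₁ ∈ f a → t₂ ∈ f b →
      ∀ p : G.Walk t₁ t₂, p.IsPath → ∀ t ∈ p.support, t ∈ ⋃ k ∈ J, f k := by
    intro a ha b hb hab t₁ t₂ ht₁ ht₂ p hp t ht
    have hIcc := isPathConvex_biUnion_Icc hG hG' hf hchain hab
    have := hIcc (Set.mem_biUnion (Set.left_mem_Icc.2 hab) ht₁)
      (Set.mem_biUnion (Set.right_mem_Icc.2 hab) ht₂) p hp t ht
    exact Set.biUnion_mono (hJ.out ha hb) (fun _ _ ↦ subset_rfl) this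
  intro t₁ t₂ ht₁ ht₂ p hp t ht
  obtain ⟨a, ha, ht₁⟩ := Set.mem_iUnion₂.1 ht₁
  obtain ⟨b, hb, ht₂⟩ := Set.mem_iUnion₂.1 ht₂
  rcases le_total a b with hab | hba
  · exact key a ha b hb hab ht₁ ht₂ p hp t ht
  · exact key b hb a ha hba ht₂ ht₁ p.reverse hp.reverse t (by simpa using ht)

end Chain

end SimpleGraph

section Vortex

variable {V ι : Type} {T : SimpleGraph ι} {bag : ι → Set V} {S0 : Set V} {m : ℕ}
  {n : Fin m → ℕ} {A : Fin m → Set V} {Ω : (i : Fin m) → Fin (n i) → V}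
  {X : (i : Fin m) → Fin (n i) → Set V}

/-- The paper's `V'_t = V_t ∪ ⋃ {X_j^i : w_j^i ∈ V_t}`. -/
def extendBags (bag : ι → Set V) (Ω : (i : Fin m) → Fin (n i) → V)
    (X : (i : Fin m) → Fin (n i) → Set V) (t : ι) : Set V :=
  bag t ∪ {v | ∃ i j, Ω i j ∈ bag t ∧ v ∈ X i j}

lemma setOf_mem_extendBags_of_mem (hbag : ∀ t, bag t ⊆ S0)
    (hmeet : ∀ i, A i ∩ S0 = Set.range (Ω i)) (hdisj : ∀ i j, i ≠ j → A i ∩ A j = ∅)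
    (hXmem : ∀ i j, Ω i j ∈ X i j) (hXsub : ∀ i j, X i j ⊆ A i) {v : V} {i : Fin m}
    (hv : v ∈ A i) :
    {t | v ∈ extendBags bag Ω X t} = ⋃ j ∈ {j | v ∈ X i j}, {t | Ω i j ∈ bag t} := by
  ext t
  simp only [extendBags, Set.mem_ofPred_eq, Set.mem_union, Set.mem_iUnion, exists_prop]
  constructor
  · rintro (hvt | ⟨i', j, hΩ, hvX⟩)
    · obtain ⟨j, rfl⟩ : v ∈ Set.range (Ω i) := hmeet i ▸ ⟨hv, hbag t hvt⟩
      exact ⟨j, hXmem i j, hvt⟩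
    · obtain rfl : i' = i := by
        by_contra hne
        exact Set.eq_empty_iff_forall_notMem.1 (hdisj i' i hne) v ⟨hXsub i' j hvX, hv⟩
      exact ⟨j, hvX, hΩ⟩
  · rintro ⟨j, hvX, hΩ⟩
    exact Or.inr ⟨i, j, hΩ, hvX⟩

lemma setOf_mem_extendBags_of_forall_notMem (hXsub : ∀ i j, X i j ⊆ A i) {v : V}
    (hv : ∀ i, v ∉ A i) : {t | v ∈ extendBags bag Ω X t} = {t | v ∈ bag t} := by
  ext t
  simp only [extendBags, Set.mem_ofPred_eq, Set.mem_union, or_iff_left_iff_imp]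
  rintro ⟨i, j, -, hvX⟩
  exact absurd (hXsub i j hvX) (hv i)

lemma isPathConvex_setOf_mem_extendBags {G0plus : SimpleGraph V}
    (hT : IsTreeDecompOn G0plus S0 T bag) (hsupp0 : ∀ u v : V, G0plus.Adj u v → u ∈ S0)
    (hmeet : ∀ i, A i ∩ S0 = Set.range (Ω i)) (hdisj : ∀ i j, i ≠ j → A i ∩ A j = ∅)
    (hconsec : ∀ i, 2 ≤ n i → ∀ j k : Fin (n i),
      (k : ℕ) = ((j : ℕ) + 1) % n i → G0plus.Adj (Ω i j) (Ω i k))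
    (hXmem : ∀ i j, Ω i j ∈ X i j) (hXsub : ∀ i j, X i j ⊆ A i)
    (hXconv : ∀ i, ∀ j k l : Fin (n i), j ≤ k → k ≤ l → X i j ∩ X i l ⊆ X i k) (v : V) :
    T.IsPathConvex {t | v ∈ extendBags bag Ω X t} := by
  obtain ⟨hconn, hacyc, hbag, -, hedge, hsub⟩ := hT
  have hconvex : ∀ u, T.IsPathConvex {t | u ∈ bag t} := fun u _ _ h₁ h₂ ↦ hsub u _ _ h₁ h₂
  by_cases hv : ∃ i, v ∈ A i
  · obtain ⟨i, hv⟩ := hv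
    rw [setOf_mem_extendBags_of_mem hbag hmeet hdisj hXmem hXsub hv]
    refine SimpleGraph.isPathConvex_biUnion_of_ordConnected hacyc hconn.preconnected
      (fun j ↦ hconvex _) (fun j k hjk ↦ ?_) ⟨fun j hj l hl k hk ↦ hXconv i j k l hk.1 hk.2 ⟨hj, hl⟩⟩
    have hk : (k : ℕ) = j + 1 := (Nat.covBy_iff_add_one_eq.1 (Fin.covBy_iff.1 hjk)).symm
    have hadj := hconsec i (by omega) j k (by rw [Nat.mod_eq_of_lt (hk ▸ k.isLt), hk])
    exact hedge _ _ hadj (hsupp0 _ _ hadj) (hsupp0 _ _ hadj.symm)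
  · push Not at hv
    rw [setOf_mem_extendBags_of_forall_notMem hXsub hv]
    exact hconvex v

end Vortex

theorem stmt_15_general {V ι : Type} (G0plus : SimpleGraph V) (S0 : Set V)
    (T : SimpleGraph ι) (bag : ι → Set V)
    (hT : IsTreeDecompOn G0plus S0 T bag)
    (hsupp0 : ∀ u v : V, G0plus.Adj u v → u ∈ S0)
    (m : ℕ) (n : Fin m → ℕ) (Gv : Fin m → SimpleGraph V) (A : Fin m → Set V)
    (Ω : (i : Fin m) → Fin (n i) → V)
    (X : (i : Fin m) → Fin (n i) → Set V)
    (hmeet : ∀ i, A i ∩ S0 = Set.range (Ω i))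
    (hdisj : ∀ i j, i ≠ j → A i ∩ A j = ∅)
    (hconsec : ∀ i, 2 ≤ n i → ∀ j k : Fin (n i),
      (k : ℕ) = ((j : ℕ) + 1) % n i → G0plus.Adj (Ω i j) (Ω i k))
    (hXmem : ∀ i j, Ω i j ∈ X i j)
    (hXsub : ∀ i j, X i j ⊆ A i)
    (hXcover : ∀ i, ∀ v ∈ A i, ∃ j, v ∈ X i j)
    (hXedge : ∀ i, ∀ u v : V, (Gv i).Adj u v → ∃ j, u ∈ X i j ∧ v ∈ X i j)
    (hXconv : ∀ i, ∀ j k l : Fin (n i), j ≤ k → k ≤ l → X i j ∩ X i l ⊆ X i k) :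
    IsTreeDecompOn (G0plus ⊔ ⨆ i, Gv i) (S0 ∪ ⋃ i, A i) T
      (fun t => bag t ∪ {v : V | ∃ i j, Ω i j ∈ bag t ∧ v ∈ X i j}) := by
  have hsubtree := isPathConvex_setOf_mem_extendBags hT hsupp0 hmeet hdisj hconsec hXmem hXsub
    hXconv
  obtain ⟨hconn, hacyc, hbag, hcover, hedge, -⟩ := hT
  have hΩ : ∀ i j, ∃ t, Ω i j ∈ bag t := fun i j ↦
    hcover _ ((hmeet i).ge (Set.mem_range_self j)).2
  refine ⟨hconn, hacyc, fun t ↦ Set.union_subset_union (hbag t) ?_, ?_, ?_,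
    fun v _ _ h₁ h₂ ↦ hsubtree v h₁ h₂⟩
  · rintro v ⟨i, j, -, hv⟩
    exact Set.mem_iUnion.2 ⟨i, hXsub i j hv⟩
  · rintro v (hv | hv)
    · obtain ⟨t, ht⟩ := hcover v hv
      exact ⟨t, Or.inl ht⟩
    · obtain ⟨i, hvi⟩ := Set.mem_iUnion.1 hv
      obtain ⟨j, hj⟩ := hXcover i v hvi
      obtain ⟨t, ht⟩ := hΩ i j
      exact ⟨t, Or.inr ⟨i, j, ht, hj⟩⟩
  · rintro u v (huv | huv) - -
    · obtain ⟨t, hu, hv⟩ := hedge u v huv (hsupp0 u v huv) (hsupp0 v u huv.symm)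
      exact ⟨t, Or.inl hu, Or.inl hv⟩
    · obtain ⟨i, hi⟩ := SimpleGraph.iSup_adj.1 huv
      obtain ⟨j, hu, hv⟩ := hXedge i u v hi
      obtain ⟨t, ht⟩ := hΩ i j
      exact ⟨t, Or.inr ⟨i, j, ht, hu⟩, Or.inr ⟨i, j, ht, hv⟩⟩

/-- Let `(T, bag)` be a tree-decomposition of `G₀⁺` (a graph on the vertex
set `S0` containing, for each vortex, the cyclic edges along its society), and for each vortex
`Gv i` (on the vertex set `A i`, meeting `S0` exactly in its society, distinct vortices
disjoint) let `X i` be a path-decomposition with the `j`-th society vertex in the `j`-th bag.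
Then enlarging each bag `bag t` by all vortex bags `X i j` with `Ω i j ∈ bag t` yields a
tree-decomposition of `G₀⁺ ∪ ⋃ᵢ Gv i`. -/
theorem stmt_15 {V ι : Type} (G0plus : SimpleGraph V) (S0 : Set V)
    (T : SimpleGraph ι) (bag : ι → Set V)
    (hT : IsTreeDecompOn G0plus S0 T bag)
    (hsupp0 : ∀ u v : V, G0plus.Adj u v → u ∈ S0)
    (m : ℕ) (n : Fin m → ℕ) (Gv : Fin m → SimpleGraph V) (A : Fin m → Set V)
    (Ω : (i : Fin m) → Fin (n i) → V)
    (X : (i : Fin m) → Fin (n i) → Set V)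
    (hn : ∀ i, 0 < n i)
    (hinj : ∀ i, Function.Injective (Ω i))
    (hsupp : ∀ i, ∀ u v : V, (Gv i).Adj u v → u ∈ A i)
    (hmeet : ∀ i, A i ∩ S0 = Set.range (Ω i))
    (hdisj : ∀ i j, i ≠ j → A i ∩ A j = ∅)
    (hconsec : ∀ i, 2 ≤ n i → ∀ j k : Fin (n i),
      (k : ℕ) = ((j : ℕ) + 1) % n i → G0plus.Adj (Ω i j) (Ω i k))
    (hXmem : ∀ i j, Ω i j ∈ X i j)
    (hXsub : ∀ i j, X i j ⊆ A i)
    (hXcover : ∀ i, ∀ v ∈ A i, ∃ j, v ∈ X i j)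
    (hXedge : ∀ i, ∀ u v : V, (Gv i).Adj u v → ∃ j, u ∈ X i j ∧ v ∈ X i j)
    (hXconv : ∀ i, ∀ j k l : Fin (n i), j ≤ k → k ≤ l → X i j ∩ X i l ⊆ X i k) :
    IsTreeDecompOn (G0plus ⊔ ⨆ i, Gv i) (S0 ∪ ⋃ i, A i) T
      (fun t => bag t ∪ {v : V | ∃ i j, Ω i j ∈ bag t ∧ v ∈ X i j}) :=
  stmt_15_general G0plus S0 T bag hT hsupp0 m n Gv A Ω X hmeet hdisj hconsec hXmem hXsub hXcover
    hXedge hXconv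
end
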